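/- arXiv:2402.16324 — 5 statements merged into one kernel-verified Lean document; each statement's English description precedes it below -/
import Mathlib

section
/- Assume m_α := min_{k∈{1,…,K}} α_k satisfies 0 < m_α ≤ 1, and assume there exists a Slater point q̄ ∈ ℝ^{S×A} with q̄ ≥ 0, B q̄ = μ and C q̄ = 0 (a feasible occupancy measure consuming no cost). Then the dual linear program min{ αᵀy + μᵀz : Cᵀy + Bᵀz ≥ r̂ (entrywise), y ≥ 0, z ∈ ℝ^S } attains its minimum, its optimal value equals V, and it admits an optimal solution (y*, z*) with ‖y*‖₁ ≤ 1/m_α and ‖z*‖_∞ ≤ 1/((1−γ)·m_α). -/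
open Matrix

open Filter Topology


private lemma sup'_le_sup'_add {A : Type*} [Fintype A] [Nonempty A] (f g : A → ℝ) (c : ℝ)
    (h : ∀ a, f a ≤ g a + c) :
    Finset.univ.sup' Finset.univ_nonempty f ≤ Finset.univ.sup' Finset.univ_nonempty g + c :=
  Finset.sup'_le _ _ fun a _ => (h a).trans
    (add_le_add_left (Finset.le_sup' g (Finset.mem_univ a)) c)

private lemma bellman {S A : Type*} [Fintype S] [Fintype A] [Nonempty S] [Nonempty A]
    (γ : ℝ) (hγ0 : 0 ≤ γ) (hγ1 : γ < 1)
    (P : S → S → A → ℝ) (hPnn : ∀ s s' a, 0 ≤ P s s' a) (hPsum : ∀ s' a, ∑ s, P s s' a = 1)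
    (r' : S × A → ℝ) :
    ∃ z : S → ℝ,
      (∀ (s' : S) (a : A), r' (s', a) + γ * ∑ s, P s s' a * z s ≤ z s') ∧
      (∀ w : S → ℝ, (∀ (s' : S) (a : A), r' (s', a) + γ * ∑ s, P s s' a * w s ≤ w s') →
        ∀ s, z s ≤ w s) ∧
      (∀ R : ℝ, (∀ x, |r' x| ≤ R) → ∀ s, |z s| ≤ R / (1 - γ)) := by
  classical
  have h1γ : (0:ℝ) < 1 - γ := by linarith
  set T : (S → ℝ) → (S → ℝ) := fun w s' =>
    Finset.univ.sup' Finset.univ_nonempty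
      (fun a => r' (s', a) + γ * ∑ s, P s s' a * w s) with hT
  -- basic estimate on the P-average
  have havg : ∀ (w w' : S → ℝ) (c : ℝ), (∀ s, w s ≤ w' s + c) → 0 ≤ c → ∀ s' a,
      ∑ s, P s s' a * w s ≤ (∑ s, P s s' a * w' s) + c := by
    intro w w' c hc hc0 s' a
    have : ∑ s, P s s' a * w s ≤ ∑ s, P s s' a * (w' s + c) :=
      Finset.sum_le_sum fun s _ => mul_le_mul_of_nonneg_left (hc s) (hPnn s s' a)
    calc ∑ s, P s s' a * w s ≤ ∑ s, P s s' a * (w' s + c) := this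
      _ = (∑ s, P s s' a * w' s) + (∑ s, P s s' a) * c := by
          rw [Finset.sum_mul]; rw [← Finset.sum_add_distrib]; congr 1; ext s; ring
      _ = (∑ s, P s s' a * w' s) + c := by rw [hPsum]; ring
  have hTdiff : ∀ (w w' : S → ℝ) (c : ℝ), (∀ s, w s ≤ w' s + c) → 0 ≤ c → ∀ s',
      T w s' ≤ T w' s' + γ * c := by
    intro w w' c hc hc0 s'
    refine sup'_le_sup'_add _ _ _ fun a => ?_
    have := havg w w' c hc hc0 s' a
    nlinarith
  -- Lipschitz
  have hlip : LipschitzWith ⟨γ, hγ0⟩ T := by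
    refine LipschitzWith.of_dist_le_mul fun w w' => ?_
    have hd0 : 0 ≤ dist w w' := dist_nonneg
    rw [dist_pi_le_iff (by positivity)]
    intro s'
    rw [Real.dist_eq, abs_sub_le_iff]
    have hle : ∀ s, w s ≤ w' s + dist w w' := fun s => by
      have := dist_le_pi_dist w w' s; rw [Real.dist_eq] at this
      have := abs_le.mp this; linarith [this.2]
    have hle' : ∀ s, w' s ≤ w s + dist w w' := fun s => by
      have := dist_le_pi_dist w w' s; rw [Real.dist_eq] at this
      have := abs_le.mp this; linarith [this.1]
    constructor
    · have := hTdiff w w' (dist w w') hle hd0 s'; change _ ≤ γ * dist w w'; linarith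
    · have := hTdiff w' w (dist w w') hle' hd0 s'; change _ ≤ γ * dist w w'; linarith
  have hcontr : ContractingWith ⟨γ, hγ0⟩ T := ⟨by exact_mod_cast hγ1, hlip⟩
  haveI : Nonempty (S → ℝ) := ⟨0⟩
  set z := ContractingWith.fixedPoint T hcontr with hz
  have hfix : T z = z := hcontr.fixedPoint_isFixedPt
  have hmono : ∀ w w' : S → ℝ, (∀ s, w s ≤ w' s) → ∀ s', T w s' ≤ T w' s' := by
    intro w w' hww s'
    have := hTdiff w w' 0 (fun s => by simpa using hww s) le_rfl s'
    simpa using this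
  refine ⟨z, ?_, ?_, ?_⟩
  · intro s' a
    have : r' (s', a) + γ * ∑ s, P s s' a * z s ≤ T z s' :=
      Finset.le_sup' (fun a => r' (s', a) + γ * ∑ s, P s s' a * z s) (Finset.mem_univ a)
    rwa [hfix] at this
  · intro w hw s
    have hTw : ∀ s', T w s' ≤ w s' := fun s' => Finset.sup'_le _ _ fun a _ => hw s' a
    have hiter : ∀ n s', T^[n] w s' ≤ w s' := by
      intro n
      induction n with
      | zero => simp
      | succ n ih =>
        intro s'
        rw [Function.iterate_succ_apply']
        exact (hmono _ _ ih s').trans (hTw s')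
    have htend : Tendsto (fun n => T^[n] w s) atTop (𝓝 (z s)) :=
      ((continuous_apply s).tendsto z).comp (hcontr.tendsto_iterate_fixedPoint w)
    exact le_of_tendsto htend (Filter.Eventually.of_forall fun n => hiter n s)
  · intro R hR s
    have hR0 : 0 ≤ R := le_trans (abs_nonneg _) (hR (Classical.arbitrary _))
    set M := R / (1 - γ) with hM
    have hM0 : 0 ≤ M := by positivity
    have hball : ∀ w : S → ℝ, (∀ s, |w s| ≤ M) → ∀ s', |T w s'| ≤ M := by
      intro w hw s'
      rw [abs_le]
      have key : ∀ a, |∑ s, P s s' a * w s| ≤ M := by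
        intro a
        calc |∑ s, P s s' a * w s| ≤ ∑ s, |P s s' a * w s| := Finset.abs_sum_le_sum_abs _ _
          _ ≤ ∑ s, P s s' a * M := Finset.sum_le_sum fun s _ => by
              rw [abs_mul, abs_of_nonneg (hPnn s s' a)]
              exact mul_le_mul_of_nonneg_left (hw s) (hPnn s s' a)
          _ = M := by rw [← Finset.sum_mul, hPsum, one_mul]
      have hRM : R + γ * M = M := by
        have hMR : M * (1 - γ) = R := by rw [hM]; exact div_mul_cancel₀ R h1γ.ne'
        linear_combination -hMR
      constructor
      · obtain a := Classical.arbitrary A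
        refine le_trans ?_ (Finset.le_sup' (fun a => r' (s', a) + γ * ∑ s, P s s' a * w s)
          (Finset.mem_univ a))
        have h1 := abs_le.mp (hR (s', a))
        have h2 := abs_le.mp (key a)
        nlinarith
      · refine Finset.sup'_le _ _ fun a _ => ?_
        have h1 := abs_le.mp (hR (s', a))
        have h2 := abs_le.mp (key a)
        nlinarith
    have hiter : ∀ n s', |T^[n] 0 s'| ≤ M := by
      intro n
      induction n with
      | zero => simpa using hM0
      | succ n ih =>
        intro s'
        rw [Function.iterate_succ_apply']
        exact hball _ ih s'
    have htend : Tendsto (fun n => T^[n] 0 s) atTop (𝓝 (z s)) :=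
      ((continuous_apply s).tendsto z).comp (hcontr.tendsto_iterate_fixedPoint 0)
    have h1 : z s ≤ M := le_of_tendsto htend (.of_forall fun n => (abs_le.mp (hiter n s)).2)
    have h2 : -M ≤ z s := ge_of_tendsto htend (.of_forall fun n => (abs_le.mp (hiter n s)).1)
    rw [abs_le]; exact ⟨h2, h1⟩


private lemma single_nonneg' {ι : Type*} [DecidableEq ι] (i j : ι) :
    (0:ℝ) ≤ (Pi.single i (1:ℝ) : ι → ℝ) j := by
  rw [Pi.single_apply]; split <;> norm_num

-- near-optimal dual solutions via hyperplane separation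
private lemma near_dual {S A K : Type*} [Fintype S] [DecidableEq S] [Fintype A] [Fintype K]
    [Nonempty K]
    (γ : ℝ) (hγ0 : 0 < γ) (hγ1 : γ < 1)
    (B : Matrix S (S × A) ℝ)
    (hBsum : ∀ x : S × A, ∑ s, B s x = 1 - γ)
    (μ : S → ℝ)
    (rhat : S × A → ℝ) (hr : ∀ x, rhat x ∈ Set.Icc (0:ℝ) 1)
    (C : Matrix K (S × A) ℝ)
    (α : K → ℝ) (hα : ∀ k, 0 < α k)
    (qbar : S × A → ℝ) (hqbar_nn : ∀ x, 0 ≤ qbar x)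
    (hqbar_flow : B.mulVec qbar = μ) (hqbar_cost : C.mulVec qbar = 0)
    (V : ℝ)
    (hub : ∀ q : S × A → ℝ, (∀ x, 0 ≤ q x) → (∀ k, C.mulVec q k ≤ α k) → B.mulVec q = μ →
      rhat ⬝ᵥ q ≤ V)
    (V' : ℝ) (hV' : V < V') :
    ∃ (Y : K → ℝ) (Z : S → ℝ), (∀ k, 0 ≤ Y k) ∧
      (∀ x : S × A, rhat x ≤ ∑ k, C k x * Y k + ∑ s, B s x * Z s) ∧
      ∑ k, α k * Y k + ∑ s, μ s * Z s < V' := by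
  classical
  have h1γ : (0:ℝ) < 1 - γ := by linarith
  set W : Set ((K → ℝ) × (S → ℝ) × ℝ) :=
    {v | ∃ q : S × A → ℝ, (∀ x, 0 ≤ q x) ∧ (∀ k, C.mulVec q k ≤ v.1 k) ∧
      v.2.1 = B.mulVec q ∧ v.2.2 ≤ rhat ⬝ᵥ q} with hW
  -- ∑ over S of B.mulVec q = (1-γ) * ∑ q
  have hBmv : ∀ q : S × A → ℝ, ∑ s, B.mulVec q s = (1 - γ) * ∑ x, q x := by
    intro q
    calc ∑ s, B.mulVec q s = ∑ s, ∑ x, B s x * q x := by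
          refine Finset.sum_congr rfl fun s _ => ?_
          simp [Matrix.mulVec, dotProduct]
      _ = ∑ x, (∑ s, B s x) * q x := by rw [Finset.sum_comm]; simp [Finset.sum_mul]
      _ = ∑ x, (1 - γ) * q x := by simp_rw [hBsum]
      _ = (1 - γ) * ∑ x, q x := by rw [Finset.mul_sum]
  have hWconv : Convex ℝ W := by
    rintro v ⟨q, hq0, hq1, hq2, hq3⟩ v' ⟨q', hq0', hq1', hq2', hq3'⟩ a b ha hb hab
    refine ⟨a • q + b • q', fun x => ?_, fun k => ?_, ?_, ?_⟩
    · have : (a • q + b • q') x = a * q x + b * q' x := by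
        simp [smul_eq_mul]
      rw [this]
      exact add_nonneg (mul_nonneg ha (hq0 x)) (mul_nonneg hb (hq0' x))
    · have : C.mulVec (a • q + b • q') k = a * C.mulVec q k + b * C.mulVec q' k := by
        simp [Matrix.mulVec_add, Matrix.mulVec_smul]
      rw [this]
      have : (a • v + b • v').1 k = a * v.1 k + b * v'.1 k := by simp
      rw [this]
      exact add_le_add (mul_le_mul_of_nonneg_left (hq1 k) ha)
        (mul_le_mul_of_nonneg_left (hq1' k) hb)
    · have : (a • v + b • v').2.1 = a • v.2.1 + b • v'.2.1 := by simp
      rw [this, hq2, hq2']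
      simp [Matrix.mulVec_add, Matrix.mulVec_smul]
    · have h : (a • v + b • v').2.2 = a * v.2.2 + b * v'.2.2 := by simp
      rw [h]
      have : rhat ⬝ᵥ (a • q + b • q') = a * (rhat ⬝ᵥ q) + b * (rhat ⬝ᵥ q') := by
        simp [dotProduct_add, dotProduct_smul, smul_eq_mul]
      rw [this]
      exact add_le_add (mul_le_mul_of_nonneg_left hq3 ha)
        (mul_le_mul_of_nonneg_left hq3' hb)
  have hWclosed : IsClosed W := by
    refine IsSeqClosed.isClosed ?_
    rintro f v hfW hfv
    choose qn hq0 hq1 hq2 hq3 using hfW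
    -- component convergence
    have hf1 : ∀ k, Tendsto (fun n => (f n).1 k) atTop (𝓝 (v.1 k)) := fun k =>
      ((continuous_apply k).tendsto _).comp ((continuous_fst.tendsto _).comp hfv)
    have hf21 : ∀ s, Tendsto (fun n => (f n).2.1 s) atTop (𝓝 (v.2.1 s)) := fun s =>
      ((continuous_apply s).tendsto _).comp
        ((continuous_fst.tendsto _).comp ((continuous_snd.tendsto _).comp hfv))
    have hf22 : Tendsto (fun n => (f n).2.2) atTop (𝓝 (v.2.2)) :=
      (continuous_snd.tendsto _).comp ((continuous_snd.tendsto _).comp hfv)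
    -- boundedness of qn
    have hsum : Tendsto (fun n => ∑ s, (f n).2.1 s) atTop (𝓝 (∑ s, v.2.1 s)) :=
      tendsto_finset_sum _ fun s _ => hf21 s
    obtain ⟨M, hM⟩ := hsum.bddAbove_range
    have hMb : ∀ n, ∑ x, qn n x ≤ M / (1 - γ) := by
      intro n
      have h1 : ∑ s, (f n).2.1 s = (1 - γ) * ∑ x, qn n x := by rw [hq2 n, hBmv]
      have h2 : ∑ s, (f n).2.1 s ≤ M := hM ⟨n, rfl⟩
      rw [h1] at h2
      rw [le_div_iff₀ h1γ]; linarith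
    set M' := M / (1 - γ) with hM'
    have hqmem : ∀ n, qn n ∈ Set.univ.pi fun _ : S × A => Set.Icc (0:ℝ) M' := by
      intro n x _
      refine ⟨hq0 n x, ?_⟩
      calc qn n x ≤ ∑ x', qn n x' :=
            Finset.single_le_sum (fun x' _ => hq0 n x') (Finset.mem_univ x)
        _ ≤ M' := hMb n
    have hcomp : IsCompact (Set.univ.pi fun _ : S × A => Set.Icc (0:ℝ) M') :=
      isCompact_univ_pi fun _ => isCompact_Icc
    obtain ⟨q, hqmem', ψ, hψ, hqt⟩ := hcomp.tendsto_subseq hqmem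
    have hqx : ∀ x, Tendsto (fun n => qn (ψ n) x) atTop (𝓝 (q x)) := fun x =>
      ((continuous_apply x).tendsto _).comp hqt
    refine ⟨q, fun x => (hqmem' x (Set.mem_univ x)).1, fun k => ?_, ?_, ?_⟩
    · have h1 : Tendsto (fun n => C.mulVec (qn (ψ n)) k) atTop (𝓝 (C.mulVec q k)) := by
        simp only [Matrix.mulVec, dotProduct]
        exact tendsto_finset_sum _ fun x _ => (hqx x).const_mul _
      exact le_of_tendsto_of_tendsto' h1 ((hf1 k).comp hψ.tendsto_atTop)
        fun n => hq1 (ψ n) k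
    · funext s
      have h1 : Tendsto (fun n => B.mulVec (qn (ψ n)) s) atTop (𝓝 (B.mulVec q s)) := by
        simp only [Matrix.mulVec, dotProduct]
        exact tendsto_finset_sum _ fun x _ => (hqx x).const_mul _
      have h2 : Tendsto (fun n => (f (ψ n)).2.1 s) atTop (𝓝 (v.2.1 s)) :=
        (hf21 s).comp hψ.tendsto_atTop
      have h3 : ∀ n, (f (ψ n)).2.1 s = B.mulVec (qn (ψ n)) s := fun n => by rw [hq2 (ψ n)]
      exact tendsto_nhds_unique (h2.congr h3) h1
    · have h1 : Tendsto (fun n => rhat ⬝ᵥ qn (ψ n)) atTop (𝓝 (rhat ⬝ᵥ q)) := by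
        simp only [dotProduct]
        exact tendsto_finset_sum _ fun x _ => (hqx x).const_mul _
      exact le_of_tendsto_of_tendsto' (hf22.comp hψ.tendsto_atTop) h1
        fun n => hq3 (ψ n)
  -- the point to separate
  have hbnot : ((α, μ, V') : (K → ℝ) × (S → ℝ) × ℝ) ∉ W := by
    rintro ⟨q, h0, h1, h2, h3⟩
    have := hub q h0 h1 h2.symm
    simp only at h3
    linarith
  obtain ⟨φ, u, hφW, hφb⟩ := geometric_hahn_banach_closed_point hWconv hWclosed hbnot
  set y : K → ℝ := fun k => φ (Pi.single k 1, 0, 0) with hy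
  set z : S → ℝ := fun s => φ (0, Pi.single s 1, 0) with hz
  set s₀ : ℝ := φ (0, 0, 1) with hs₀def
  have hdecomp : ∀ (uu : K → ℝ) (vv : S → ℝ) (t : ℝ),
      φ (uu, vv, t) = ∑ k, uu k * y k + ∑ s, vv s * z s + t * s₀ := by
    intro uu vv t
    have h1 : ((uu, vv, t) : (K → ℝ) × (S → ℝ) × ℝ) =
        (∑ k, uu k • ((Pi.single k 1 : K → ℝ), (0 : S → ℝ), (0:ℝ))) +
        (∑ s, vv s • ((0 : K → ℝ), (Pi.single s 1 : S → ℝ), (0:ℝ))) +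
        t • ((0 : K → ℝ), (0 : S → ℝ), (1:ℝ)) := by
      refine Prod.ext ?_ (Prod.ext ?_ ?_)
      · simp only [Prod.fst_add, Prod.fst_sum, Prod.smul_fst, Prod.snd_add, smul_zero,
          Finset.sum_const_zero, add_zero, zero_add]
        funext i
        simp [Pi.single_apply, Finset.sum_ite_eq', mul_comm]
      · simp only [Prod.snd_add, Prod.fst_add, Prod.snd_sum, Prod.fst_sum, Prod.smul_snd,
          Prod.smul_fst, smul_zero, Finset.sum_const_zero, add_zero, zero_add]
        funext i
        simp [Pi.single_apply, Finset.sum_ite_eq', mul_comm]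
      · simp [Prod.snd_sum]
    rw [h1, map_add, map_add, map_sum, map_sum]
    simp only [ContinuousLinearMap.map_smul, smul_eq_mul]
    rfl
  have h0W : ((0, 0, 0) : (K → ℝ) × (S → ℝ) × ℝ) ∈ W :=
    ⟨0, fun x => le_rfl, fun k => by simp [Matrix.mulVec_zero], by simp [Matrix.mulVec_zero],
      by simp⟩
  have hu0 : 0 < u := by
    have := hφW _ h0W
    have h0 : φ ((0, 0, 0) : (K → ℝ) × (S → ℝ) × ℝ) = 0 := by
      have h : ((0,0,0) : (K → ℝ) × (S → ℝ) × ℝ) = 0 := rfl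
      rw [h, map_zero]
    linarith
  -- recession directions
  have hdir : ∀ (q : S × A → ℝ), (∀ x, 0 ≤ q x) → ∀ (w : K → ℝ), (∀ k, 0 ≤ w k) →
      ∀ t : ℝ, 0 ≤ t → φ (C.mulVec q + w, B.mulVec q, rhat ⬝ᵥ q - t) ≤ 0 := by
    intro q hq w hw t ht
    by_contra hpos
    push_neg at hpos
    set d : (K → ℝ) × (S → ℝ) × ℝ := (C.mulVec q + w, B.mulVec q, rhat ⬝ᵥ q - t) with hd
    set v₀ : (K → ℝ) × (S → ℝ) × ℝ := (0, μ, rhat ⬝ᵥ qbar) with hv₀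
    have hv₀W : ∀ c : ℝ, 0 ≤ c → v₀ + c • d ∈ W := by
      intro c hc
      refine ⟨qbar + c • q, fun x => ?_, fun k => ?_, ?_, ?_⟩
      · have : (qbar + c • q) x = qbar x + c * q x := by simp [smul_eq_mul]
        rw [this]
        have := hqbar_nn x; have := hq x
        nlinarith
      · have h1 : C.mulVec (qbar + c • q) k = c * C.mulVec q k := by
          simp [Matrix.mulVec_add, Matrix.mulVec_smul, hqbar_cost]
        have h2 : (v₀ + c • d).1 k = c * (C.mulVec q k + w k) := by
          simp [hv₀, hd]; ring
        rw [h1, h2]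
        have := hw k
        nlinarith
      · have h2 : (v₀ + c • d).2.1 = μ + c • B.mulVec q := by simp [hv₀, hd]
        rw [h2, Matrix.mulVec_add, Matrix.mulVec_smul, hqbar_flow]
      · have h2 : (v₀ + c • d).2.2 = rhat ⬝ᵥ qbar + c * (rhat ⬝ᵥ q - t) := by simp [hv₀, hd]
        have h3 : rhat ⬝ᵥ (qbar + c • q) = rhat ⬝ᵥ qbar + c * (rhat ⬝ᵥ q) := by
          simp [dotProduct_add, dotProduct_smul, smul_eq_mul]
        rw [h2, h3]
        nlinarith
    have hv₀lt : φ v₀ < u := by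
      have := hφW _ (hv₀W 0 le_rfl)
      simpa using this
    set c := (u - φ v₀ + 1) / φ d with hc
    have hc0 : 0 ≤ c := by
      apply div_nonneg _ hpos.le
      linarith
    have := hφW _ (hv₀W c hc0)
    rw [map_add, ContinuousLinearMap.map_smul, smul_eq_mul, hc,
      div_mul_cancel₀ _ (ne_of_gt hpos)] at this
    linarith
  have hyneg : ∀ k, y k ≤ 0 := by
    intro k
    have := hdir 0 (fun x => le_rfl) (Pi.single k 1) (fun k' => single_nonneg' k k') 0 le_rfl
    simpa [Matrix.mulVec_zero, dotProduct_zero, hy] using this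
  have hs₀nn : 0 ≤ s₀ := by
    have := hdir 0 (fun x => le_rfl) 0 (fun k => le_rfl) 1 zero_le_one
    have h2 : φ ((0 : K → ℝ), (0 : S → ℝ), (-1 : ℝ)) = -s₀ := by
      have h : ((0, 0, -1) : (K → ℝ) × (S → ℝ) × ℝ) = -(0, 0, 1) := by
        refine Prod.ext (by simp) (Prod.ext (by simp) (by simp))
      rw [h, map_neg, hs₀def]
    simp only [Matrix.mulVec_zero, dotProduct_zero, add_zero, zero_sub] at this
    rw [h2] at this
    linarith
  have hzμ : ∑ s, μ s * z s + (rhat ⬝ᵥ qbar) * s₀ ≤ 0 := by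
    have h := hdir qbar hqbar_nn 0 (fun k => le_rfl) 0 le_rfl
    rw [hqbar_cost, hqbar_flow, add_zero, sub_zero, hdecomp] at h
    simpa using h
  have hx : ∀ x : S × A, ∑ k, C k x * y k + ∑ s, B s x * z s + rhat x * s₀ ≤ 0 := by
    intro x
    have h := hdir (Pi.single x 1) (fun x' => single_nonneg' x x') 0 (fun k => le_rfl) 0 le_rfl
    rw [Matrix.mulVec_single, Matrix.mulVec_single, dotProduct_single, add_zero,
      sub_zero, hdecomp] at h
    simpa [mul_one] using h
  have hb' : u < ∑ k, α k * y k + ∑ s, μ s * z s + V' * s₀ := by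
    rw [hdecomp] at hφb
    exact hφb
  have hs₀pos : 0 < s₀ := by
    rcases hs₀nn.lt_or_eq with h | h
    · exact h
    · exfalso
      rw [← h] at hzμ hb'
      simp only [mul_zero, add_zero] at hzμ hb'
      have h1 : ∑ k, α k * y k ≤ 0 :=
        Finset.sum_nonpos fun k _ => mul_nonpos_of_nonneg_of_nonpos (hα k).le (hyneg k)
      linarith
  refine ⟨fun k => -y k / s₀, fun s => -z s / s₀,
    fun k => div_nonneg (neg_nonneg.mpr (hyneg k)) hs₀nn, ?_, ?_⟩
  · intro x
    have h := hx x
    have e1 : ∑ k, C k x * (-y k / s₀) = (∑ k, C k x * (-y k)) / s₀ := by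
      rw [Finset.sum_div]
      exact Finset.sum_congr rfl fun k _ => by ring
    have e2 : ∑ s, B s x * (-z s / s₀) = (∑ s, B s x * (-z s)) / s₀ := by
      rw [Finset.sum_div]
      exact Finset.sum_congr rfl fun s _ => by ring
    have e3 : ∑ k, C k x * (-y k) = -∑ k, C k x * y k := by
      rw [← Finset.sum_neg_distrib]
      exact Finset.sum_congr rfl fun k _ => by ring
    have e4 : ∑ s, B s x * (-z s) = -∑ s, B s x * z s := by
      rw [← Finset.sum_neg_distrib]
      exact Finset.sum_congr rfl fun s _ => by ring
    rw [e1, e2, ← add_div, le_div_iff₀ hs₀pos, e3, e4]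
    linarith
  · have e1 : ∑ k, α k * (-y k / s₀) = (∑ k, α k * (-y k)) / s₀ := by
      rw [Finset.sum_div]
      exact Finset.sum_congr rfl fun k _ => by ring
    have e2 : ∑ s, μ s * (-z s / s₀) = (∑ s, μ s * (-z s)) / s₀ := by
      rw [Finset.sum_div]
      exact Finset.sum_congr rfl fun s _ => by ring
    have e3 : ∑ k, α k * (-y k) = -∑ k, α k * y k := by
      rw [← Finset.sum_neg_distrib]
      exact Finset.sum_congr rfl fun k _ => by ring
    have e4 : ∑ s, μ s * (-z s) = -∑ s, μ s * z s := by
      rw [← Finset.sum_neg_distrib]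
      exact Finset.sum_congr rfl fun s _ => by ring
    rw [e1, e2, ← add_div, div_lt_iff₀ hs₀pos, e3, e4]
    linarith
/-- Boundedness of an optimal dual solution of the CMDP linear program under Slater's
condition: the dual LP attains its minimum, its value equals the primal value `V`, and it
admits an optimal solution `(y*, z*)` with `‖y*‖₁ ≤ 1/mα` and `‖z*‖∞ ≤ 1/((1−γ)·mα)`,
where `mα = min_k α_k ∈ (0,1]`. -/
theorem dual_LP_attained_and_bounded
    (S A K : Type*) [Fintype S] [DecidableEq S] [Fintype A] [Fintype K] [Nonempty K]
    (γ : ℝ) (hγ : γ ∈ Set.Ioo (0:ℝ) 1)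
    (P : S → S → A → ℝ)
    (hPnn : ∀ s s' a, 0 ≤ P s s' a)
    (hPsum : ∀ s' a, ∑ s, P s s' a = 1)
    (μ₁ : S → ℝ) (hμnn : ∀ s, 0 ≤ μ₁ s) (hμsum : ∑ s, μ₁ s = 1)
    (B : Matrix S (S × A) ℝ)
    (hB : ∀ s s' a, B s (s', a) = (if s = s' then (1:ℝ) else 0) - γ * P s s' a)
    (μ : S → ℝ) (hμ : ∀ s, μ s = (1 - γ) * μ₁ s)
    (rhat : S × A → ℝ) (hr : ∀ x, rhat x ∈ Set.Icc (0:ℝ) 1)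
    (C : Matrix K (S × A) ℝ) (hC : ∀ k x, C k x ∈ Set.Icc (0:ℝ) 1)
    (α : K → ℝ)
    (mα : ℝ) (hmα : mα = Finset.univ.inf' Finset.univ_nonempty α)
    (hmα_pos : 0 < mα) (hmα_le : mα ≤ 1)
    (qbar : S × A → ℝ) (hqbar_nn : ∀ x, 0 ≤ qbar x)
    (hqbar_flow : B.mulVec qbar = μ) (hqbar_cost : C.mulVec qbar = 0)
    (V : ℝ)
    (hV : IsGreatest {v | ∃ q : S × A → ℝ, (∀ x, 0 ≤ q x) ∧
      (∀ k, C.mulVec q k ≤ α k) ∧ B.mulVec q = μ ∧ v = rhat ⬝ᵥ q} V) :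
    ∃ (y : K → ℝ) (z : S → ℝ),
      (∀ k, 0 ≤ y k) ∧
      (∀ x : S × A, rhat x ≤ ∑ k, C k x * y k + ∑ s, B s x * z s) ∧
      (∑ k, α k * y k + ∑ s, μ s * z s = V) ∧
      (∀ (y' : K → ℝ) (z' : S → ℝ), (∀ k, 0 ≤ y' k) →
        (∀ x : S × A, rhat x ≤ ∑ k, C k x * y' k + ∑ s, B s x * z' s) →
        V ≤ ∑ k, α k * y' k + ∑ s, μ s * z' s) ∧
      (∑ k, |y k| ≤ 1 / mα) ∧
      (∀ s, |z s| ≤ 1 / ((1 - γ) * mα)) := by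
  classical
  obtain ⟨hγ0, hγ1⟩ := hγ
  have h1γ : (0:ℝ) < 1 - γ := by linarith
  haveI hS : Nonempty S := by
    by_contra h
    rw [not_nonempty_iff] at h
    rw [Finset.univ_eq_empty, Finset.sum_empty] at hμsum
    norm_num at hμsum
  have hα : ∀ k, 0 < α k := fun k =>
    lt_of_lt_of_le hmα_pos (hmα ▸ Finset.inf'_le α (Finset.mem_univ k))
  have hBsum : ∀ x : S × A, ∑ s, B s x = 1 - γ := by
    rintro ⟨s', a⟩
    have h1 : ∑ s, B s (s', a) = ∑ s, ((if s = s' then (1:ℝ) else 0) - γ * P s s' a) :=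
      Finset.sum_congr rfl fun s _ => hB s s' a
    rw [h1, Finset.sum_sub_distrib, Finset.sum_ite_eq' Finset.univ s' (fun _ => (1:ℝ)),
      ← Finset.mul_sum, hPsum]
    simp
  have hmv : ∀ (q : S × A → ℝ) (s : S), B.mulVec q s = ∑ x, B s x * q x := by
    intro q s; simp [Matrix.mulVec, dotProduct]
  have hmvC : ∀ (q : S × A → ℝ) (k : K), C.mulVec q k = ∑ x, C k x * q x := by
    intro q k; simp [Matrix.mulVec, dotProduct]
  have hdp : ∀ v w : S × A → ℝ, v ⬝ᵥ w = ∑ x, v x * w x := fun v w => rfl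
  have hBmv : ∀ q : S × A → ℝ, ∑ s, B.mulVec q s = (1 - γ) * ∑ x, q x := by
    intro q
    calc ∑ s, B.mulVec q s = ∑ s, ∑ x, B s x * q x :=
          Finset.sum_congr rfl fun s _ => hmv q s
      _ = ∑ x, (∑ s, B s x) * q x := by rw [Finset.sum_comm]; simp [Finset.sum_mul]
      _ = ∑ x, (1 - γ) * q x := by simp_rw [hBsum]
      _ = (1 - γ) * ∑ x, q x := by rw [Finset.mul_sum]
  have hμsum' : ∑ s, μ s = 1 - γ := by
    simp_rw [hμ]; rw [← Finset.mul_sum, hμsum, mul_one]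
  have hqsum : ∀ q : S × A → ℝ, B.mulVec q = μ → ∑ x, q x = 1 := by
    intro q hq
    have h1 : ∑ s, B.mulVec q s = ∑ s, μ s := by rw [hq]
    rw [hBmv, hμsum'] at h1
    have h2 : (1 - γ) * ∑ x, q x = (1 - γ) * 1 := by rw [mul_one]; exact h1
    exact mul_left_cancel₀ (ne_of_gt h1γ) h2
  haveI hA : Nonempty A := by
    by_contra h
    rw [not_nonempty_iff] at h
    have h1 := hqsum qbar hqbar_flow
    rw [Finset.univ_eq_empty, Finset.sum_empty] at h1
    norm_num at h1
  have hμnn' : ∀ s, 0 ≤ μ s := fun s => by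
    rw [hμ]; exact mul_nonneg h1γ.le (hμnn s)
  have hqbarC : ∀ k, C.mulVec qbar k ≤ α k := fun k => by
    rw [hqbar_cost]; exact (hα k).le
  have hrqbar : 0 ≤ rhat ⬝ᵥ qbar := by
    rw [hdp]
    exact Finset.sum_nonneg fun x _ => mul_nonneg (hr x).1 (hqbar_nn x)
  have hV0 : 0 ≤ V := le_trans hrqbar (hV.2 ⟨qbar, hqbar_nn, hqbarC, hqbar_flow, rfl⟩)
  obtain ⟨qstar, hqs0, hqsC, hqsB, hqsV⟩ := hV.1
  have hV1 : V ≤ 1 := by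
    rw [hqsV, hdp]
    calc ∑ x, rhat x * qstar x ≤ ∑ x, 1 * qstar x :=
          Finset.sum_le_sum fun x _ => mul_le_mul_of_nonneg_right (hr x).2 (hqs0 x)
      _ = 1 := by simp_rw [one_mul]; exact hqsum qstar hqsB
  -- pairing identities
  have hswapB : ∀ (q : S × A → ℝ) (z : S → ℝ),
      ∑ x, (∑ s, B s x * z s) * q x = ∑ s, B.mulVec q s * z s := by
    intro q z
    calc ∑ x, (∑ s, B s x * z s) * q x = ∑ x, ∑ s, B s x * z s * q x := by
          simp_rw [Finset.sum_mul]
      _ = ∑ s, ∑ x, B s x * z s * q x := Finset.sum_comm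
      _ = ∑ s, (∑ x, B s x * q x) * z s := by
          refine Finset.sum_congr rfl fun s _ => ?_
          rw [Finset.sum_mul]
          exact Finset.sum_congr rfl fun x _ => by ring
      _ = ∑ s, B.mulVec q s * z s := by simp_rw [hmv]
  have hswapC : ∀ (q : S × A → ℝ) (y : K → ℝ),
      ∑ x, (∑ k, C k x * y k) * q x = ∑ k, C.mulVec q k * y k := by
    intro q y
    calc ∑ x, (∑ k, C k x * y k) * q x = ∑ x, ∑ k, C k x * y k * q x := by
          simp_rw [Finset.sum_mul]
      _ = ∑ k, ∑ x, C k x * y k * q x := Finset.sum_comm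
      _ = ∑ k, (∑ x, C k x * q x) * y k := by
          refine Finset.sum_congr rfl fun k _ => ?_
          rw [Finset.sum_mul]
          exact Finset.sum_congr rfl fun x _ => by ring
      _ = ∑ k, C.mulVec q k * y k := by simp_rw [hmvC]
  -- weak duality
  have hweak : ∀ (y' : K → ℝ) (z' : S → ℝ), (∀ k, 0 ≤ y' k) →
      (∀ x : S × A, rhat x ≤ ∑ k, C k x * y' k + ∑ s, B s x * z' s) →
      V ≤ ∑ k, α k * y' k + ∑ s, μ s * z' s := by
    intro y' z' hy' hfz
    have h1 : V ≤ ∑ x, (∑ k, C k x * y' k + ∑ s, B s x * z' s) * qstar x := by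
      rw [hqsV, hdp]
      exact Finset.sum_le_sum fun x _ => mul_le_mul_of_nonneg_right (hfz x) (hqs0 x)
    have h2 : ∑ x, (∑ k, C k x * y' k + ∑ s, B s x * z' s) * qstar x
        = ∑ k, C.mulVec qstar k * y' k + ∑ s, B.mulVec qstar s * z' s := by
      simp_rw [add_mul, Finset.sum_add_distrib, hswapB, hswapC]
    have h3 : ∑ k, C.mulVec qstar k * y' k ≤ ∑ k, α k * y' k :=
      Finset.sum_le_sum fun k _ => mul_le_mul_of_nonneg_right (hqsC k) (hy' k)
    have h4 : ∑ s, B.mulVec qstar s * z' s = ∑ s, μ s * z' s := by rw [hqsB]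
    rw [h2, h4] at h1
    linarith
  -- Slater lower bound on μ·z for dual-feasible pairs
  have hμzge : ∀ (y' : K → ℝ) (z' : S → ℝ),
      (∀ x : S × A, rhat x ≤ ∑ k, C k x * y' k + ∑ s, B s x * z' s) →
      rhat ⬝ᵥ qbar ≤ ∑ s, μ s * z' s := by
    intro y' z' hfz
    have h1 : rhat ⬝ᵥ qbar ≤ ∑ x, (∑ k, C k x * y' k + ∑ s, B s x * z' s) * qbar x := by
      rw [hdp]
      exact Finset.sum_le_sum fun x _ => mul_le_mul_of_nonneg_right (hfz x) (hqbar_nn x)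
    have h2 : ∑ x, (∑ k, C k x * y' k + ∑ s, B s x * z' s) * qbar x
        = ∑ k, C.mulVec qbar k * y' k + ∑ s, B.mulVec qbar s * z' s := by
      simp_rw [add_mul, Finset.sum_add_distrib, hswapB, hswapC]
    have h3 : ∑ k, C.mulVec qbar k * y' k = 0 := by
      rw [hqbar_cost]; simp
    have h4 : ∑ s, B.mulVec qbar s * z' s = ∑ s, μ s * z' s := by rw [hqbar_flow]
    rw [h2, h3, h4, zero_add] at h1
    exact h1
  -- Bellman form of dual feasibility
  have hBz : ∀ (z : S → ℝ) (s' : S) (a : A),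
      ∑ s, B s (s', a) * z s = z s' - γ * ∑ s, P s s' a * z s := by
    intro z s' a
    have h1 : ∀ s, B s (s', a) * z s
        = (if s = s' then z s else 0) - γ * (P s s' a * z s) := by
      intro s
      rw [hB s s' a]
      by_cases h : s = s' <;> simp [h] <;> ring
    rw [Finset.sum_congr rfl fun s _ => h1 s, Finset.sum_sub_distrib,
      Finset.sum_ite_eq' Finset.univ s' (fun s => z s), ← Finset.mul_sum]
    simp
  have hfeas_iff : ∀ (y : K → ℝ) (z : S → ℝ),
      (∀ x : S × A, rhat x ≤ ∑ k, C k x * y k + ∑ s, B s x * z s) ↔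
      (∀ (s' : S) (a : A), (rhat (s', a) - ∑ k, C k (s', a) * y k)
        + γ * ∑ s, P s s' a * z s ≤ z s') := by
    intro y z
    constructor
    · intro h s' a
      have h1 := h (s', a)
      rw [hBz] at h1
      linarith
    · rintro h ⟨s', a⟩
      have h1 := h s' a
      rw [hBz]
      linarith
  -- near-optimal dual sequence
  have hub : ∀ q : S × A → ℝ, (∀ x, 0 ≤ q x) → (∀ k, C.mulVec q k ≤ α k) →
      B.mulVec q = μ → rhat ⬝ᵥ q ≤ V := fun q h0 h1 h2 => hV.2 ⟨q, h0, h1, h2, rfl⟩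
  have hseq : ∀ n : ℕ, ∃ yz : (K → ℝ) × (S → ℝ), (∀ k, 0 ≤ yz.1 k) ∧
      (∀ x : S × A, rhat x ≤ ∑ k, C k x * yz.1 k + ∑ s, B s x * yz.2 s) ∧
      ∑ k, α k * yz.1 k + ∑ s, μ s * yz.2 s < V + 1 / (n + 1) := by
    intro n
    have hpos : (0:ℝ) < 1 / (n + 1) := by positivity
    obtain ⟨Y, Z, h1, h2, h3⟩ := near_dual γ hγ0 hγ1 B hBsum μ rhat hr C α hα qbar
      hqbar_nn hqbar_flow hqbar_cost V hub (V + 1 / (n + 1)) (by linarith)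
    exact ⟨(Y, Z), h1, h2, h3⟩
  choose YZ hYZ1 hYZ2 hYZ3 using hseq
  set Y : ℕ → K → ℝ := fun n => (YZ n).1 with hYdef
  set Z : ℕ → S → ℝ := fun n => (YZ n).2 with hZdef
  -- bound on Y
  have hαy : ∀ (y' : K → ℝ), (∀ k, 0 ≤ y' k) → mα * ∑ k, y' k ≤ ∑ k, α k * y' k := by
    intro y' hy'
    rw [Finset.mul_sum]
    refine Finset.sum_le_sum fun k _ => mul_le_mul_of_nonneg_right ?_ (hy' k)
    exact le_trans (le_of_eq hmα) (Finset.inf'_le α (Finset.mem_univ k))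
  have hYsum : ∀ n, ∑ k, Y n k ≤ (V + 1) / mα := by
    intro n
    have h1 : rhat ⬝ᵥ qbar ≤ ∑ s, μ s * Z n s := hμzge (Y n) (Z n) (hYZ2 n)
    have h2 := hYZ3 n
    have h3 : (1:ℝ) / (n + 1) ≤ 1 := by
      rw [div_le_one (by positivity)]
      have : (0:ℝ) ≤ (n:ℝ) := Nat.cast_nonneg n
      linarith
    have h4 := hαy (Y n) (hYZ1 n)
    rw [le_div_iff₀ hmα_pos]
    nlinarith
  -- Bellman replacement
  choose zb hzb1 hzb2 hzb3 using fun n : ℕ => bellman γ hγ0.le hγ1 P hPnn hPsum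
    (fun x => rhat x - ∑ k, C k x * Y n k)
  set R : ℝ := 1 + (V + 1) / mα with hRdef
  have hCYnn : ∀ (y' : K → ℝ), (∀ k, 0 ≤ y' k) → ∀ x : S × A,
      0 ≤ ∑ k, C k x * y' k ∧ ∑ k, C k x * y' k ≤ ∑ k, y' k := by
    intro y' hy' x
    constructor
    · exact Finset.sum_nonneg fun k _ => mul_nonneg (hC k x).1 (hy' k)
    · exact Finset.sum_le_sum fun k _ => by
        have := (hC k x).2
        have := hy' k
        nlinarith
  have hr'bound : ∀ n (x : S × A), |rhat x - ∑ k, C k x * Y n k| ≤ R := by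
    intro n x
    obtain ⟨hl, hu⟩ := hCYnn (Y n) (hYZ1 n) x
    have h1 := hYsum n
    have h2 := (hr x).1
    have h3 := (hr x).2
    have h4 : 0 ≤ (V + 1) / mα := by positivity
    rw [abs_le, hRdef]
    constructor
    · linarith
    · linarith
  have hfeasb : ∀ n (x : S × A), rhat x ≤ ∑ k, C k x * Y n k + ∑ s, B s x * zb n s :=
    fun n => (hfeas_iff (Y n) (zb n)).mpr (hzb1 n)
  have hzb_le : ∀ n s, zb n s ≤ Z n s :=
    fun n => hzb2 n (Z n) ((hfeas_iff (Y n) (Z n)).mp (hYZ2 n))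
  have hvalb : ∀ n, ∑ k, α k * Y n k + ∑ s, μ s * zb n s < V + 1 / (n + 1) := by
    intro n
    have h1 : ∑ s, μ s * zb n s ≤ ∑ s, μ s * Z n s :=
      Finset.sum_le_sum fun s _ => mul_le_mul_of_nonneg_left (hzb_le n s) (hμnn' s)
    have h2 := hYZ3 n
    linarith
  have hzbbound : ∀ n s, |zb n s| ≤ R / (1 - γ) := fun n => hzb3 n R (hr'bound n)
  -- compactness and limit
  set Kset : Set ((K → ℝ) × (S → ℝ)) :=
    (Set.univ.pi fun _ : K => Set.Icc (0:ℝ) ((V + 1) / mα)) ×ˢ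
    (Set.univ.pi fun _ : S => Set.Icc (-(R / (1 - γ))) (R / (1 - γ))) with hKset
  have hKcomp : IsCompact Kset :=
    (isCompact_univ_pi fun _ => isCompact_Icc).prod (isCompact_univ_pi fun _ => isCompact_Icc)
  have hmem : ∀ n, ((Y n, zb n) : (K → ℝ) × (S → ℝ)) ∈ Kset := by
    intro n
    constructor
    · intro k _
      refine ⟨hYZ1 n k, ?_⟩
      calc Y n k ≤ ∑ k', Y n k' :=
            Finset.single_le_sum (fun k' _ => hYZ1 n k') (Finset.mem_univ k)
        _ ≤ (V + 1) / mα := hYsum n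
    · intro s _
      exact abs_le.mp (hzbbound n s)
  obtain ⟨⟨ys, zc⟩, hmemlim, ψ, hψ, htend⟩ := hKcomp.tendsto_subseq hmem
  have htend' : Tendsto (fun n => ((Y (ψ n), zb (ψ n)) : (K → ℝ) × (S → ℝ))) atTop
      (𝓝 (ys, zc)) := htend
  have hYlim : ∀ k, Tendsto (fun n => Y (ψ n) k) atTop (𝓝 (ys k)) := fun k =>
    Tendsto.comp (f := fun n => ((Y (ψ n), zb (ψ n)) : (K → ℝ) × (S → ℝ)))
      (((continuous_apply k).comp continuous_fst).tendsto (ys, zc)) htend'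
  have hzlim : ∀ s, Tendsto (fun n => zb (ψ n) s) atTop (𝓝 (zc s)) := fun s =>
    Tendsto.comp (f := fun n => ((Y (ψ n), zb (ψ n)) : (K → ℝ) × (S → ℝ)))
      (((continuous_apply s).comp continuous_snd).tendsto (ys, zc)) htend' 
  have hys0 : ∀ k, 0 ≤ ys k := fun k =>
    ge_of_tendsto (hYlim k) (Filter.Eventually.of_forall fun n => hYZ1 (ψ n) k)
  have hfeaslim : ∀ x : S × A, rhat x ≤ ∑ k, C k x * ys k + ∑ s, B s x * zc s := by
    intro x
    have h1 : Tendsto (fun n => ∑ k, C k x * Y (ψ n) k + ∑ s, B s x * zb (ψ n) s) atTop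
        (𝓝 (∑ k, C k x * ys k + ∑ s, B s x * zc s)) :=
      (tendsto_finset_sum _ fun k _ => (hYlim k).const_mul _).add
        (tendsto_finset_sum _ fun s _ => (hzlim s).const_mul _)
    exact ge_of_tendsto h1 (Filter.Eventually.of_forall fun n => hfeasb (ψ n) x)
  have hvallim : ∑ k, α k * ys k + ∑ s, μ s * zc s ≤ V := by
    have h1 : Tendsto (fun n => ∑ k, α k * Y (ψ n) k + ∑ s, μ s * zb (ψ n) s) atTop
        (𝓝 (∑ k, α k * ys k + ∑ s, μ s * zc s)) :=
      (tendsto_finset_sum _ fun k _ => (hYlim k).const_mul _).add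
        (tendsto_finset_sum _ fun s _ => (hzlim s).const_mul _)
    have h2 : Tendsto (fun n : ℕ => V + 1 / ((n:ℝ) + 1)) atTop (𝓝 V) := by
      have := tendsto_one_div_add_atTop_nhds_zero_nat (𝕜 := ℝ)
      have h3 := (tendsto_const_nhds (x := V) (f := atTop (α := ℕ))).add this
      simpa using h3
    refine le_of_tendsto_of_tendsto' h1 h2 fun n => ?_
    have h4 : (1:ℝ) / (↑(ψ n) + 1) ≤ 1 / ((n:ℝ) + 1) := by
      apply one_div_le_one_div_of_le (by positivity)
      have : (n:ℝ) ≤ (ψ n : ℝ) := Nat.cast_le.mpr hψ.le_apply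
      linarith
    have h5 := hvalb (ψ n)
    linarith
  -- final Bellman replacement at the limit
  obtain ⟨zst, hz1, hz2, hz3⟩ := bellman γ hγ0.le hγ1 P hPnn hPsum
    (fun x => rhat x - ∑ k, C k x * ys k)
  have hfeasst : ∀ x : S × A, rhat x ≤ ∑ k, C k x * ys k + ∑ s, B s x * zst s :=
    (hfeas_iff ys zst).mpr hz1
  have hzstle : ∀ s, zst s ≤ zc s := hz2 zc ((hfeas_iff ys zc).mp hfeaslim)
  have hvalle : ∑ k, α k * ys k + ∑ s, μ s * zst s ≤ V := by
    have h1 : ∑ s, μ s * zst s ≤ ∑ s, μ s * zc s :=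
      Finset.sum_le_sum fun s _ => mul_le_mul_of_nonneg_left (hzstle s) (hμnn' s)
    linarith
  have hvalge : V ≤ ∑ k, α k * ys k + ∑ s, μ s * zst s := hweak ys zst hys0 hfeasst
  have hvaleq : ∑ k, α k * ys k + ∑ s, μ s * zst s = V := le_antisymm hvalle hvalge
  have hsumys : ∑ k, ys k ≤ 1 / mα := by
    have h1 := hαy ys hys0
    have h2 : rhat ⬝ᵥ qbar ≤ ∑ s, μ s * zst s := hμzge ys zst hfeasst
    rw [le_div_iff₀ hmα_pos]
    nlinarith
  have habs : ∑ k, |ys k| = ∑ k, ys k :=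
    Finset.sum_congr rfl fun k _ => abs_of_nonneg (hys0 k)
  have hzstbound : ∀ s, |zst s| ≤ 1 / ((1 - γ) * mα) := by
    have hbd : ∀ x : S × A, |rhat x - ∑ k, C k x * ys k| ≤ 1 / mα := by
      intro x
      obtain ⟨hl, hu⟩ := hCYnn ys hys0 x
      have h2 := (hr x).1
      have h3 := (hr x).2
      have h4 : (1:ℝ) ≤ 1 / mα := by
        rw [le_div_iff₀ hmα_pos]; linarith
      rw [abs_le]
      constructor <;> nlinarith [hsumys]
    intro s
    have := hz3 (1 / mα) hbd s
    have heq : 1 / mα / (1 - γ) = 1 / ((1 - γ) * mα) := by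
      rw [div_div, mul_comm]
    rwa [heq] at this
  exact ⟨ys, zst, hys0, hfeasst, hvaleq, hweak, habs ▸ hsumys, hzstbound⟩
end

section
/- Let P̄ be any transition kernel on S×A, i.e., P̄(s|s′,a) ≥ 0 and Σ_{s∈S} P̄(s|s′,a) = 1 for every (s′,a), let B̄ be the S × (S×A) matrix with entries B̄(s,(s′,a)) = δ_{s,s′} − γ·P̄(s|s′,a), and let λ ≥ 0. Then every q ∈ ℝ^{S×A} with q ≥ 0 and B̄ q ≤ μ + λ·1 entrywise satisfies Σ_{s∈S} Σ_{a∈A} q(s,a) ≤ 1 + |S|·λ/(1−γ). -/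
/-- Bound on the ℓ₁ norm of any feasible point of the empirical occupancy-measure LP with
slack λ: summing the relaxed flow constraints over all states gives
Σ q ≤ 1 + |S|·λ/(1−γ). -/
theorem empirical_LP_l1_bound
    (S A : Type*) [Fintype S] [DecidableEq S] [Fintype A]
    (γ : ℝ) (hγ : γ ∈ Set.Ioo (0:ℝ) 1)
    (μ₁ : S → ℝ) (hμnn : ∀ s, 0 ≤ μ₁ s) (hμsum : ∑ s, μ₁ s = 1)
    (Pbar : S → S → A → ℝ)
    (hPnn : ∀ s s' a, 0 ≤ Pbar s s' a)
    (hPsum : ∀ s' a, ∑ s, Pbar s s' a = 1)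
    (lam : ℝ) (hlam : 0 ≤ lam)
    (q : S → A → ℝ) (hq : ∀ s a, 0 ≤ q s a)
    (hcons : ∀ s, ∑ s', ∑ a, q s' a * ((if s = s' then (1:ℝ) else 0) - γ * Pbar s s' a)
      ≤ (1 - γ) * μ₁ s + lam) :
    ∑ s, ∑ a, q s a ≤ 1 + (Fintype.card S : ℝ) * lam / (1 - γ) := by
  obtain ⟨hγ0, hγ1⟩ := hγ
  have hsum := Finset.sum_le_sum (fun s (_ : s ∈ Finset.univ) => hcons s)
  have hL : ∑ s, ∑ s', ∑ a, q s' a * ((if s = s' then (1:ℝ) else 0) - γ * Pbar s s' a)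
      = (1 - γ) * ∑ s, ∑ a, q s a := by
    rw [Finset.sum_comm, Finset.mul_sum]
    refine Finset.sum_congr rfl fun s' _ => ?_
    rw [Finset.sum_comm, Finset.mul_sum]
    refine Finset.sum_congr rfl fun a _ => ?_
    rw [← Finset.mul_sum, Finset.sum_sub_distrib, ← Finset.mul_sum, hPsum]
    simp [Finset.sum_ite_eq', mul_comm]
  have hR : ∑ s, ((1 - γ) * μ₁ s + lam)
      = (1 - γ) + (Fintype.card S : ℝ) * lam := by
    rw [Finset.sum_add_distrib, ← Finset.mul_sum, hμsum, Finset.sum_const,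
      nsmul_eq_mul, mul_one, Finset.card_univ]
  rw [hL, hR] at hsum
  have h1γ : (0:ℝ) < 1 - γ := by linarith
  calc ∑ s, ∑ a, q s a ≤ (1 - γ + (Fintype.card S : ℝ) * lam) / (1 - γ) :=
        (le_div_iff₀ h1γ).mpr (by linarith [mul_comm (1 - γ) (∑ s, ∑ a, q s a)])
    _ = 1 + (Fintype.card S : ℝ) * lam / (1 - γ) := by field_simp
end

section
/- Let C be a K×M real matrix, B a b×M real matrix, r ∈ ℝ^M, α ∈ ℝ^K, μ ∈ ℝ^b. For a subset S ⊆ {1,…,M}, let Feas(S) = { q ∈ ℝ^M : q ≥ 0, C q ≤ α, B q = μ, and qᵢ = 0 for all i ∉ S }. Suppose I ⊆ {1,…,M} is such that Feas(I) is nonempty, the supremum V_I of rᵀq over Feas(I) is attained, and for every i ∈ I, every q ∈ Feas(I∖{i}) satisfies rᵀq < V_I. Then |I| ≤ K + b. -/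
open Matrix

/-- Any support set `I` that is irreducible for the LP
`max {rᵀq : Cq ≤ α, Bq = μ, q ≥ 0, supp q ⊆ I}` — in the sense that deleting any single
coordinate of `I` strictly decreases the restricted LP value — has cardinality at most the
total number `K + b` of inequality and equality constraints. -/
theorem irreducible_support_card_le
    (M K b : ℕ)
    (C : Matrix (Fin K) (Fin M) ℝ) (B : Matrix (Fin b) (Fin M) ℝ)
    (r : Fin M → ℝ) (α : Fin K → ℝ) (μ : Fin b → ℝ)
    (Feas : Finset (Fin M) → Set (Fin M → ℝ))
    (hFeas : ∀ S : Finset (Fin M), Feas S =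
      {q | (∀ i, 0 ≤ q i) ∧ (∀ k, C.mulVec q k ≤ α k) ∧ B.mulVec q = μ ∧
        ∀ i ∉ S, q i = 0})
    (I : Finset (Fin M)) (VI : ℝ)
    (hatt : ∃ q ∈ Feas I, r ⬝ᵥ q = VI ∧ ∀ q' ∈ Feas I, r ⬝ᵥ q' ≤ VI)
    (hirr : ∀ i ∈ I, ∀ q ∈ Feas (I.erase i), r ⬝ᵥ q < VI) :
    I.card ≤ K + b := by
  by_contra hcard
  push_neg at hcard
  obtain ⟨q, hqF, hqV, hopt⟩ := hatt
  rw [hFeas] at hqF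
  obtain ⟨hq0, hqC, hqB, hqsupp⟩ := hqF
  -- the optimum is strictly positive on I
  have hpos : ∀ i ∈ I, 0 < q i := by
    intro i hi
    rcases lt_or_eq_of_le (hq0 i) with h | h
    · exact h
    · exfalso
      have hmem : q ∈ Feas (I.erase i) := by
        rw [hFeas]
        refine ⟨hq0, hqC, hqB, ?_⟩
        intro j hj
        by_cases hjI : j ∈ I
        · have hji : j = i := by
            by_contra hne
            exact hj (Finset.mem_erase.mpr ⟨hne, hjI⟩)
          rw [hji, ← h]
        · exact hqsupp j hjI
      have := hirr i hi q hmem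
      rw [hqV] at this
      exact lt_irrefl _ this
  have hInonempty : I.Nonempty := by
    rcases Finset.eq_empty_or_nonempty I with h | h
    · rw [h] at hcard; simp at hcard
    · exact h
  -- extension-by-zero map
  let ψ : (↥I → ℝ) →ₗ[ℝ] (Fin M → ℝ) :=
    { toFun := fun f j => if h : j ∈ I then f ⟨j, h⟩ else 0
      map_add' := by intro f g; funext j; by_cases h : j ∈ I <;> simp [h]
      map_smul' := by intro c f; funext j; by_cases h : j ∈ I <;> simp [h] }
  let L : (Fin M → ℝ) →ₗ[ℝ] (Fin K → ℝ) × (Fin b → ℝ) :=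
    { toFun := fun v => (C.mulVec v, B.mulVec v)
      map_add' := by intro v w; simp [Matrix.mulVec_add]
      map_smul' := by intro c v; simp [Matrix.mulVec_smul] }
  have hnotinj : ¬ Function.Injective (L ∘ₗ ψ) := by
    intro hinj
    have h1 := LinearMap.finrank_le_finrank_of_injective hinj
    rw [Module.finrank_fintype_fun_eq_card, Fintype.card_coe] at h1
    have h2 : Module.finrank ℝ ((Fin K → ℝ) × (Fin b → ℝ)) = K + b := by
      simp [Module.finrank_prod, Module.finrank_fintype_fun_eq_card]
    rw [h2] at h1
    omega
  obtain ⟨f, hfker, hf0⟩ : ∃ f, (L ∘ₗ ψ) f = 0 ∧ f ≠ 0 := by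
    by_contra hc
    push_neg at hc
    exact hnotinj ((LinearMap.ker_eq_bot).mp (by
      rw [Submodule.eq_bot_iff]
      intro x hx
      exact hc x hx))
  set d : Fin M → ℝ := ψ f with hd
  have hdsupp : ∀ j ∉ I, d j = 0 := by
    intro j hj
    simp only [hd, ψ, LinearMap.coe_mk, AddHom.coe_mk]
    exact dif_neg hj
  have hdI : ∀ i : ↥I, d (i : Fin M) = f i := by
    intro i
    simp only [hd, ψ, LinearMap.coe_mk, AddHom.coe_mk]
    rw [dif_pos i.2]
  have hd0 : d ≠ 0 := by
    intro h
    apply hf0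
    funext i
    have := congrFun h (i : Fin M)
    rw [hdI i] at this
    exact this
  have hCd : C.mulVec d = 0 := congrArg Prod.fst hfker
  have hBd : B.mulVec d = 0 := congrArg Prod.snd hfker
  -- small perturbation radius
  set ε : ℝ := I.inf' hInonempty (fun i => q i / (|d i| + 1)) with hε
  have hε0 : 0 < ε := by
    rw [hε, Finset.lt_inf'_iff]
    intro i hi
    exact div_pos (hpos i hi) (by positivity)
  have hεbound : ∀ i, ε * |d i| ≤ q i := by
    intro i
    by_cases hi : i ∈ I
    · have h1 : ε ≤ q i / (|d i| + 1) := Finset.inf'_le _ hi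
      have h2 : ε * (|d i| + 1) ≤ q i := by
        rw [← le_div_iff₀ (by positivity)]
        exact h1
      nlinarith [abs_nonneg (d i), hε0.le]
    · rw [hdsupp i hi]
      simp [hq0 i]
  -- both small perturbations are feasible
  have hfeas_pert : ∀ t : ℝ, |t| ≤ ε → (q + t • d) ∈ Feas I := by
    intro t ht
    rw [hFeas]
    refine ⟨?_, ?_, ?_, ?_⟩
    · intro i
      have h1 : |t * d i| ≤ ε * |d i| := by
        rw [abs_mul]
        exact mul_le_mul_of_nonneg_right ht (abs_nonneg _)
      have h2 := hεbound i
      have := neg_abs_le (t * d i)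
      simp only [Pi.add_apply, Pi.smul_apply, smul_eq_mul]
      linarith
    · intro k
      rw [Matrix.mulVec_add, Matrix.mulVec_smul, hCd]
      simpa using hqC k
    · rw [Matrix.mulVec_add, Matrix.mulVec_smul, hBd]
      simpa using hqB
    · intro i hi
      simp [hqsupp i hi, hdsupp i hi]
  have hrd : r ⬝ᵥ d = 0 := by
    have h1 := hopt _ (hfeas_pert ε (by rw [abs_of_pos hε0]))
    have h2 := hopt _ (hfeas_pert (-ε) (by rw [abs_neg, abs_of_pos hε0]))
    rw [dotProduct_add, dotProduct_smul, hqV, smul_eq_mul] at h1 h2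
    nlinarith
  -- choose the direction so some coordinate of d is negative, and find a coordinate in I
  obtain ⟨i0, hi0⟩ : ∃ i0, d i0 ≠ 0 := by
    by_contra hc
    push_neg at hc
    exact hd0 (funext fun i => hc i)
  set e : Fin M → ℝ := if d i0 < 0 then d else -d with he
  have heI : ∀ j ∉ I, e j = 0 := by
    intro j hj
    rw [he]
    split <;> simp [hdsupp j hj]
  have hCe : C.mulVec e = 0 := by
    rw [he]; split
    · exact hCd
    · rw [Matrix.mulVec_neg, hCd, neg_zero]
  have hBe : B.mulVec e = 0 := by
    rw [he]; split
    · exact hBd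
    · rw [Matrix.mulVec_neg, hBd, neg_zero]
  have hre : r ⬝ᵥ e = 0 := by
    rw [he]; split
    · exact hrd
    · rw [dotProduct_neg, hrd, neg_zero]
  have hei0 : e i0 < 0 := by
    rw [he]
    rcases lt_trichotomy (d i0) 0 with h | h | h
    · simp [h]
    · exact absurd h hi0
    · rw [if_neg (not_lt.mpr h.le)]
      simpa using h
  -- the negative-support set
  set N : Finset (Fin M) := I.filter (fun i => e i < 0) with hN
  have hi0I : i0 ∈ I := by
    by_contra hc
    rw [heI i0 hc] at hei0
    exact lt_irrefl _ hei0
  have hNne : N.Nonempty := ⟨i0, Finset.mem_filter.mpr ⟨hi0I, hei0⟩⟩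
  set t : ℝ := N.inf' hNne (fun i => q i / (-e i)) with ht
  have ht0 : 0 < t := by
    rw [ht, Finset.lt_inf'_iff]
    intro i hi
    obtain ⟨hiI, hie⟩ := Finset.mem_filter.mp hi
    exact div_pos (hpos i hiI) (by linarith)
  obtain ⟨j, hjN, hjt⟩ := Finset.exists_mem_eq_inf' hNne (fun i => q i / (-e i))
  obtain ⟨hjI, hje⟩ := Finset.mem_filter.mp hjN
  set p : Fin M → ℝ := q + t • e with hp
  have hpj : p j = 0 := by
    simp only [hp, Pi.add_apply, Pi.smul_apply, smul_eq_mul]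
    rw [ht, hjt]
    have hne : e j ≠ 0 := ne_of_lt hje
    field_simp
    ring
  have hpmem : p ∈ Feas (I.erase j) := by
    rw [hFeas]
    refine ⟨?_, ?_, ?_, ?_⟩
    · intro i
      simp only [hp, Pi.add_apply, Pi.smul_apply, smul_eq_mul]
      rcases lt_or_ge (e i) 0 with hlt | hge
      · have hiI : i ∈ I := by
          by_contra hc
          rw [heI i hc] at hlt
          exact lt_irrefl _ hlt
        have hiN : i ∈ N := Finset.mem_filter.mpr ⟨hiI, hlt⟩
        have h1 : t ≤ q i / (-e i) := by
          rw [ht]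
          exact Finset.inf'_le _ hiN
        have h2 : t * (-e i) ≤ q i := by
          rw [← le_div_iff₀ (by linarith)]
          exact h1
        linarith
      · nlinarith [hq0 i]
    · intro k
      rw [Matrix.mulVec_add, Matrix.mulVec_smul, hCe]
      simpa using hqC k
    · rw [Matrix.mulVec_add, Matrix.mulVec_smul, hBe]
      simpa using hqB
    · intro i hi
      by_cases hiI : i ∈ I
      · have hij : i = j := by
          by_contra hne
          exact hi (Finset.mem_erase.mpr ⟨hne, hiI⟩)
        rw [hij]; exact hpj
      · simp [hp, hqsupp i hiI, heI i hiI]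
  have hlt := hirr j hjI p hpmem
  rw [hp, dotProduct_add, dotProduct_smul, hre, smul_eq_mul, mul_zero, add_zero, hqV] at hlt
  exact lt_irrefl _ hlt
end

section
/- Let m ≥ 1, let A be an invertible m×m real matrix with all entries in [−1,1], and let σ = 1/‖A⁻¹‖₂ be its smallest singular value (‖·‖₂ denotes the operator norm induced by the Euclidean vector norm). Let d ∈ ℝ^m with ‖d‖₂ ≥ c for some c ∈ (0,1], set q* = A⁻¹d, and assume ‖q*‖₂ ≤ 1. Let Ā be an m×m real matrix with |Ā_{ij} − A_{ij}| ≤ ρ for all entries, where m²·ρ ≤ σ/4, and let d̄ ∈ ℝ^m with ‖d̄ − d‖_∞ ≤ ν, where ν ≤ σ·c/(4m⁴). Then Ā is invertible, and q̄ = Ā⁻¹d̄ satisfies ‖q̄ − q*‖₂ ≤ 1; in particular ‖q̄‖₂ ≤ 2. -/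
set_option maxHeartbeats 1000000
set_option synthInstance.maxHeartbeats 1000000



/-- The operator norm of a square real matrix induced by the Euclidean vector norm. -/
noncomputable def matL2OpNorm {m : ℕ} (M : Matrix (Fin m) (Fin m) ℝ) : ℝ :=
  ‖Matrix.toEuclideanCLM (𝕜 := ℝ) M‖

/-- The Euclidean norm of a vector in `ℝ^m`. -/
noncomputable def eucNorm {m : ℕ} (v : Fin m → ℝ) : ℝ :=
  Real.sqrt (∑ i, v i ^ 2)

private lemma euc_apply {m : ℕ} (M : Matrix (Fin m) (Fin m) ℝ) (v : Fin m → ℝ) :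
    Matrix.toEuclideanCLM (𝕜 := ℝ) M ((WithLp.equiv 2 (Fin m → ℝ)).symm v) =
      (WithLp.equiv 2 (Fin m → ℝ)).symm (M.mulVec v) := by
  rw [WithLp.equiv_symm_apply, Matrix.toEuclideanCLM_toLp]

private lemma eucNorm_eq {m : ℕ} (v : Fin m → ℝ) :
    eucNorm v = ‖(WithLp.equiv 2 (Fin m → ℝ)).symm v‖ := by
  rw [eucNorm, EuclideanSpace.norm_eq]
  congr 1
  apply Finset.sum_congr rfl
  intro i _
  simp [WithLp.equiv_symm_apply, Real.norm_eq_abs, sq_abs]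

private lemma coord_le {m : ℕ} (x : EuclideanSpace ℝ (Fin m)) (j : Fin m) : |x j| ≤ ‖x‖ := by
  rw [EuclideanSpace.norm_eq]
  have h : |x j| ^ 2 ≤ ∑ i, ‖x i‖ ^ 2 := by
    have := Finset.single_le_sum (f := fun i => ‖x i‖ ^ 2)
      (fun i _ => by positivity) (Finset.mem_univ j)
    simpa [Real.norm_eq_abs] using this
  calc |x j| = Real.sqrt (|x j| ^ 2) := (Real.sqrt_sq (abs_nonneg _)).symm
    _ ≤ _ := Real.sqrt_le_sqrt h

private lemma opNorm_le_of_entries {m : ℕ} (hm : 1 ≤ m) (M : Matrix (Fin m) (Fin m) ℝ) {ρ : ℝ}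
    (hρ0 : 0 ≤ ρ) (h : ∀ i j, |M i j| ≤ ρ) :
    ‖Matrix.toEuclideanCLM (𝕜 := ℝ) M‖ ≤ (m : ℝ) ^ 2 * ρ := by
  have hm1 : (1 : ℝ) ≤ (m : ℝ) := by exact_mod_cast hm
  apply ContinuousLinearMap.opNorm_le_bound _ (by positivity)
  intro x
  have key : ∀ i, |(Matrix.toEuclideanCLM (𝕜 := ℝ) M x) i| ≤ (m : ℝ) * ρ * ‖x‖ := by
    intro i
    have happ : (Matrix.toEuclideanCLM (𝕜 := ℝ) M x) i = ∑ j, M i j * x j := by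
      have := congrFun (congrArg (fun (w : Fin m → ℝ) => w)
        (Matrix.ofLp_toEuclideanCLM M x)) i
      simpa [Matrix.toLin'_apply, Matrix.mulVec, dotProduct] using this
    rw [happ]
    calc |∑ j, M i j * x j| ≤ ∑ j, |M i j * x j| := Finset.abs_sum_le_sum_abs _ _
      _ ≤ ∑ _j : Fin m, ρ * ‖x‖ := by
          apply Finset.sum_le_sum
          intro j _
          rw [abs_mul]
          exact mul_le_mul (h i j) (coord_le x j) (abs_nonneg _) hρ0
      _ = (m : ℝ) * (ρ * ‖x‖) := by
          rw [Finset.sum_const, Finset.card_univ, Fintype.card_fin, nsmul_eq_mul]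
      _ = (m : ℝ) * ρ * ‖x‖ := by ring
  rw [EuclideanSpace.norm_eq]
  calc Real.sqrt (∑ i, ‖(Matrix.toEuclideanCLM (𝕜 := ℝ) M x) i‖ ^ 2)
      ≤ Real.sqrt (∑ _i : Fin m, ((m : ℝ) * ρ * ‖x‖) ^ 2) := by
        apply Real.sqrt_le_sqrt
        apply Finset.sum_le_sum
        intro i _
        rw [Real.norm_eq_abs]
        exact pow_le_pow_left₀ (abs_nonneg _) (key i) 2
    _ = Real.sqrt ((m : ℝ) * ((m : ℝ) * ρ * ‖x‖) ^ 2) := by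
        rw [Finset.sum_const, Finset.card_univ, Fintype.card_fin, nsmul_eq_mul]
    _ ≤ Real.sqrt (((m : ℝ) * ((m : ℝ) * ρ * ‖x‖)) ^ 2) := by
        apply Real.sqrt_le_sqrt
        nlinarith [sq_nonneg ((m : ℝ) * ρ * ‖x‖),
          mul_nonneg (mul_nonneg (by linarith : (0:ℝ) ≤ (m:ℝ)) (by linarith : (0:ℝ) ≤ (m:ℝ) - 1))
            (sq_nonneg ((m : ℝ) * ρ * ‖x‖))]
    _ = (m : ℝ) * ((m : ℝ) * ρ * ‖x‖) := Real.sqrt_sq (by positivity)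
    _ = (m : ℝ) ^ 2 * ρ * ‖x‖ := by ring

private lemma eucNorm_le_of_entries {m : ℕ} (hm : 1 ≤ m) (w : Fin m → ℝ) {ν : ℝ}
    (hν0 : 0 ≤ ν) (h : ∀ i, |w i| ≤ ν) : eucNorm w ≤ (m : ℝ) * ν := by
  have hm1 : (1 : ℝ) ≤ (m : ℝ) := by exact_mod_cast hm
  rw [eucNorm]
  calc Real.sqrt (∑ i, w i ^ 2) ≤ Real.sqrt (∑ _i : Fin m, ν ^ 2) := by
        apply Real.sqrt_le_sqrt
        apply Finset.sum_le_sum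
        intro i _
        calc w i ^ 2 = |w i| ^ 2 := (sq_abs _).symm
          _ ≤ ν ^ 2 := pow_le_pow_left₀ (abs_nonneg _) (h i) 2
    _ = Real.sqrt ((m : ℝ) * ν ^ 2) := by
        rw [Finset.sum_const, Finset.card_univ, Fintype.card_fin, nsmul_eq_mul]
    _ ≤ Real.sqrt (((m : ℝ) * ν) ^ 2) := by
        apply Real.sqrt_le_sqrt
        nlinarith [sq_nonneg ν, mul_nonneg (mul_nonneg (by linarith : (0:ℝ) ≤ (m:ℝ))
          (by linarith : (0:ℝ) ≤ (m:ℝ) - 1)) (sq_nonneg ν)]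
    _ = (m : ℝ) * ν := Real.sqrt_sq (by positivity)

/-- Deterministic core of the paper's Lemma 4: if the empirical basis matrix `Ā` is
entrywise within `ρ` of the invertible true basis matrix `A` (with `m²ρ ≤ σ/4`, `σ` the
smallest singular value of `A`) and the right-hand side `d̄` is within `ν ≤ σc/(4m⁴)` of
`d` in sup norm, then `Ā` is invertible and the resolved solution `q̄ = Ā⁻¹d̄` satisfies
`‖q̄ − q*‖₂ ≤ 1`, hence `‖q̄‖₂ ≤ 2`. -/
theorem resolved_solution_stays_bounded
    (m : ℕ) (hm : 1 ≤ m)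
    (A : Matrix (Fin m) (Fin m) ℝ) (hA : IsUnit A.det)
    (hAent : ∀ i j, A i j ∈ Set.Icc (-1 : ℝ) 1)
    (σ : ℝ) (hσ : σ = 1 / matL2OpNorm A⁻¹)
    (d : Fin m → ℝ) (c : ℝ) (hc : c ∈ Set.Ioc (0:ℝ) 1)
    (hd : c ≤ eucNorm d)
    (qstar : Fin m → ℝ) (hqs : qstar = A⁻¹.mulVec d)
    (hqsn : eucNorm qstar ≤ 1)
    (Abar : Matrix (Fin m) (Fin m) ℝ) (ρ : ℝ)
    (hAbar : ∀ i j, |Abar i j - A i j| ≤ ρ)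
    (hρ : (m : ℝ) ^ 2 * ρ ≤ σ / 4)
    (dbar : Fin m → ℝ) (ν : ℝ)
    (hdbar : ∀ i, |dbar i - d i| ≤ ν)
    (hν : ν ≤ σ * c / (4 * (m : ℝ) ^ 4)) :
    IsUnit Abar.det ∧
    eucNorm (Abar⁻¹.mulVec dbar - qstar) ≤ 1 ∧
    eucNorm (Abar⁻¹.mulVec dbar) ≤ 2 := by
  classical
  have hm1 : (1 : ℝ) ≤ (m : ℝ) := by exact_mod_cast hm
  set T := Matrix.toEuclideanCLM (𝕜 := ℝ) (n := Fin m) with hT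
  set a : EuclideanSpace ℝ (Fin m) →L[ℝ] EuclideanSpace ℝ (Fin m) := T A⁻¹ with ha
  set N : EuclideanSpace ℝ (Fin m) →L[ℝ] EuclideanSpace ℝ (Fin m) := T A with hN
  have hinv1 : a * N = 1 := by
    rw [ha, hN, ← map_mul, Matrix.nonsing_inv_mul A hA, map_one]
  have hinv2 : N * a = 1 := by
    rw [ha, hN, ← map_mul, Matrix.mul_nonsing_inv A hA, map_one]
  have i0 : Fin m := ⟨0, hm⟩
  have hane : a ≠ 0 := by
    intro h0
    have h1 : (1 : EuclideanSpace ℝ (Fin m) →L[ℝ] EuclideanSpace ℝ (Fin m)) = 0 := by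
      rw [← hinv1, h0, zero_mul]
    have := congrFun (congrArg (fun (f : EuclideanSpace ℝ (Fin m) →L[ℝ] EuclideanSpace ℝ (Fin m))
      => (f ((WithLp.equiv 2 (Fin m → ℝ)).symm (fun _ => 1)) : Fin m → ℝ)) h1) i0
    simp [ContinuousLinearMap.one_apply] at this
  have hα : 0 < ‖a‖ := norm_pos_iff.mpr hane
  have hσα : σ * ‖a‖ = 1 := by
    rw [hσ, matL2OpNorm, ← ha]
    field_simp
  have hσ0 : 0 < σ := by
    rw [hσ, matL2OpNorm, ← ha]
    exact one_div_pos.mpr hα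
  have hρ0 : 0 ≤ ρ := le_trans (abs_nonneg _) (hAbar i0 i0)
  set E : Matrix (Fin m) (Fin m) ℝ := Abar - A with hE
  have hTE : ‖T E‖ ≤ σ / 4 := by
    refine le_trans (opNorm_le_of_entries hm E hρ0 (fun i j => ?_)) hρ
    simpa [hE, Matrix.sub_apply] using hAbar i j
  have ht : ‖-(a * T E)‖ < 1 := by
    rw [norm_neg]
    calc ‖a * T E‖ ≤ ‖a‖ * ‖T E‖ := norm_mul_le _ _
      _ ≤ ‖a‖ * (σ / 4) := by
          apply mul_le_mul_of_nonneg_left hTE (le_of_lt hα)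
      _ < 1 := by nlinarith
  set u : (EuclideanSpace ℝ (Fin m) →L[ℝ] EuclideanSpace ℝ (Fin m))ˣ :=
    Units.oneSub (-(a * T E)) ht with hu
  have huval : (u : EuclideanSpace ℝ (Fin m) →L[ℝ] EuclideanSpace ℝ (Fin m)) = 1 + a * T E := by
    rw [hu, Units.val_oneSub, sub_neg_eq_add]
  have hfact : T Abar = N * u := by
    rw [huval, mul_add, mul_one, ← mul_assoc, hinv2, one_mul]
    rw [hE, map_sub]
    abel
  have hTAbarUnit : IsUnit (T Abar) := by
    rw [hfact]
    exact IsUnit.mul (⟨⟨N, a, hinv2, hinv1⟩, rfl⟩ : IsUnit N) u.isUnit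
  have hAbarUnit : IsUnit Abar := by
    have := hTAbarUnit.map (Matrix.toEuclideanCLM (𝕜 := ℝ) (n := Fin m)).symm
    rwa [← hT, StarAlgEquiv.symm_apply_apply] at this
  have hAbarDet : IsUnit Abar.det := (Matrix.isUnit_iff_isUnit_det Abar).mp hAbarUnit
  set b : EuclideanSpace ℝ (Fin m) →L[ℝ] EuclideanSpace ℝ (Fin m) := T Abar⁻¹ with hb
  have hbinv1 : b * T Abar = 1 := by
    rw [hb, ← map_mul, Matrix.nonsing_inv_mul Abar hAbarDet, map_one]
  have hbinv2 : T Abar * b = 1 := by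
    rw [hb, ← map_mul, Matrix.mul_nonsing_inv Abar hAbarDet, map_one]
  have hbeq : b = (↑u⁻¹ : EuclideanSpace ℝ (Fin m) →L[ℝ] EuclideanSpace ℝ (Fin m)) * a := by
    have h1 : ((↑u⁻¹ : EuclideanSpace ℝ (Fin m) →L[ℝ] EuclideanSpace ℝ (Fin m)) * a) * T Abar
        = 1 := by
      rw [hfact, mul_assoc, ← mul_assoc a N, hinv1, one_mul, ← Units.val_mul, inv_mul_cancel,
        Units.val_one]
    calc b = 1 * b := (one_mul b).symm
      _ = (((↑u⁻¹ : EuclideanSpace ℝ (Fin m) →L[ℝ] EuclideanSpace ℝ (Fin m)) * a) * T Abar) * b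
          := by rw [h1]
      _ = ((↑u⁻¹ : EuclideanSpace ℝ (Fin m) →L[ℝ] EuclideanSpace ℝ (Fin m)) * a)
          * (T Abar * b) := by rw [mul_assoc]
      _ = _ := by rw [hbinv2, mul_one]
  have huinv : ‖(↑u⁻¹ : EuclideanSpace ℝ (Fin m) →L[ℝ] EuclideanSpace ℝ (Fin m))‖ ≤ 4 / 3 := by
    have h1 : ‖(↑u⁻¹ : EuclideanSpace ℝ (Fin m) →L[ℝ] EuclideanSpace ℝ (Fin m))‖
        ≤ ‖(1 : EuclideanSpace ℝ (Fin m) →L[ℝ] EuclideanSpace ℝ (Fin m))‖ - 1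
          + (1 - ‖-(a * T E)‖)⁻¹ := tsum_geometric_le_of_norm_lt_one _ ht
    have hone : ‖(1 : EuclideanSpace ℝ (Fin m) →L[ℝ] EuclideanSpace ℝ (Fin m))‖ ≤ 1 := by
      rw [ContinuousLinearMap.one_def]
      exact ContinuousLinearMap.norm_id_le
    have h2 : ‖-(a * T E)‖ ≤ 1 / 4 := by
      rw [norm_neg]
      calc ‖a * T E‖ ≤ ‖a‖ * ‖T E‖ := norm_mul_le _ _
        _ ≤ ‖a‖ * (σ / 4) := mul_le_mul_of_nonneg_left hTE (le_of_lt hα)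
        _ = 1 / 4 := by linear_combination hσα / 4
    have h3 : (1 - ‖-(a * T E)‖)⁻¹ ≤ 4 / 3 := by
      rw [← one_div]
      rw [div_le_div_iff₀ (by linarith [norm_nonneg (-(a * T E))]) (by norm_num)]
      linarith [norm_nonneg (-(a * T E))]
    linarith
  have hbnorm : ‖b‖ ≤ 4 / 3 * ‖a‖ := by
    rw [hbeq]
    calc ‖(↑u⁻¹ : EuclideanSpace ℝ (Fin m) →L[ℝ] EuclideanSpace ℝ (Fin m)) * a‖
        ≤ ‖(↑u⁻¹ : EuclideanSpace ℝ (Fin m) →L[ℝ] EuclideanSpace ℝ (Fin m))‖ * ‖a‖ :=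
          norm_mul_le _ _
      _ ≤ 4 / 3 * ‖a‖ := mul_le_mul_of_nonneg_right huinv (norm_nonneg a)
  -- right-hand side perturbation
  have hν0 : 0 ≤ ν := le_trans (abs_nonneg _) (hdbar i0)
  have hdd : eucNorm (dbar - d) ≤ σ / 4 := by
    refine le_trans (eucNorm_le_of_entries hm _ hν0 (fun i => by simpa using hdbar i)) ?_
    have hν' : ν * (4 * (m : ℝ) ^ 4) ≤ σ * c := by
      rw [← le_div_iff₀ (by positivity)]
      exact hν
    have hm3 : (1 : ℝ) ≤ (m : ℝ) ^ 3 := one_le_pow₀ hm1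
    have hc1 : c ≤ 1 := hc.2
    have hc0 : 0 < c := hc.1
    nlinarith [mul_nonneg (mul_nonneg (by linarith : (0:ℝ) ≤ 4 * (m:ℝ)) hν0)
      (by linarith : (0:ℝ) ≤ (m:ℝ)^3 - 1), mul_le_mul_of_nonneg_left hc1 hσ0.le]
  -- operator identity
  have h5 : b * T E * a = a - b := by
    have hTEeq : T E = T Abar - N := by rw [hE, map_sub, hN]
    calc b * T E * a = (b * T Abar - b * N) * a := by rw [hTEeq, mul_sub]
      _ = b * T Abar * a - b * (N * a) := by rw [sub_mul, mul_assoc b N a]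
      _ = 1 * a - b * 1 := by rw [hbinv1, hinv2]
      _ = a - b := by rw [one_mul, mul_one]
  -- vector identity
  have hεsub : ∀ x y : Fin m → ℝ, (WithLp.equiv 2 (Fin m → ℝ)).symm (x - y)
      = (WithLp.equiv 2 (Fin m → ℝ)).symm x - (WithLp.equiv 2 (Fin m → ℝ)).symm y :=
    fun x y => rfl
  have e1 : (WithLp.equiv 2 (Fin m → ℝ)).symm (Abar⁻¹.mulVec dbar)
      = b ((WithLp.equiv 2 (Fin m → ℝ)).symm dbar) := (euc_apply _ _).symm
  have e2 : (WithLp.equiv 2 (Fin m → ℝ)).symm qstar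
      = a ((WithLp.equiv 2 (Fin m → ℝ)).symm d) := by
    rw [hqs]; exact (euc_apply _ _).symm
  have hkey : (WithLp.equiv 2 (Fin m → ℝ)).symm (Abar⁻¹.mulVec dbar - qstar)
      = b ((WithLp.equiv 2 (Fin m → ℝ)).symm (dbar - d))
        - (b * T E) ((WithLp.equiv 2 (Fin m → ℝ)).symm qstar) := by
    rw [hεsub, e1, e2, hεsub, map_sub]
    have e3 : (b * T E) (a ((WithLp.equiv 2 (Fin m → ℝ)).symm d))
        = (b * T E * a) ((WithLp.equiv 2 (Fin m → ℝ)).symm d) :=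
      (ContinuousLinearMap.mul_apply _ _ _).symm
    rw [e3, h5, ContinuousLinearMap.sub_apply]
    abel
  have hq1 : eucNorm (Abar⁻¹.mulVec dbar - qstar) ≤ 1 := by
    rw [eucNorm_eq, hkey]
    have n1 : ‖b ((WithLp.equiv 2 (Fin m → ℝ)).symm (dbar - d))‖
        ≤ ‖b‖ * ‖(WithLp.equiv 2 (Fin m → ℝ)).symm (dbar - d)‖ := b.le_opNorm _
    have n2 : ‖(b * T E) ((WithLp.equiv 2 (Fin m → ℝ)).symm qstar)‖
        ≤ ‖b‖ * ‖T E‖ * ‖(WithLp.equiv 2 (Fin m → ℝ)).symm qstar‖ := by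
      calc ‖(b * T E) ((WithLp.equiv 2 (Fin m → ℝ)).symm qstar)‖
          ≤ ‖b * T E‖ * ‖(WithLp.equiv 2 (Fin m → ℝ)).symm qstar‖ := (b * T E).le_opNorm _
        _ ≤ ‖b‖ * ‖T E‖ * ‖(WithLp.equiv 2 (Fin m → ℝ)).symm qstar‖ :=
            mul_le_mul_of_nonneg_right (norm_mul_le _ _) (norm_nonneg _)
    have hεd : ‖(WithLp.equiv 2 (Fin m → ℝ)).symm (dbar - d)‖ ≤ σ / 4 := by
      rw [← eucNorm_eq]; exact hdd
    have hεq : ‖(WithLp.equiv 2 (Fin m → ℝ)).symm qstar‖ ≤ 1 := by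
      rw [← eucNorm_eq]; exact hqsn
    have hεq0 : 0 ≤ ‖(WithLp.equiv 2 (Fin m → ℝ)).symm qstar‖ := norm_nonneg _
    have hεd0 : 0 ≤ ‖(WithLp.equiv 2 (Fin m → ℝ)).symm (dbar - d)‖ := norm_nonneg _
    have hb0 : 0 ≤ ‖b‖ := norm_nonneg _
    have hTE0 : 0 ≤ ‖T E‖ := norm_nonneg _
    calc ‖b ((WithLp.equiv 2 (Fin m → ℝ)).symm (dbar - d))
          - (b * T E) ((WithLp.equiv 2 (Fin m → ℝ)).symm qstar)‖
        ≤ ‖b ((WithLp.equiv 2 (Fin m → ℝ)).symm (dbar - d))‖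
          + ‖(b * T E) ((WithLp.equiv 2 (Fin m → ℝ)).symm qstar)‖ := norm_sub_le _ _
      _ ≤ ‖b‖ * ‖(WithLp.equiv 2 (Fin m → ℝ)).symm (dbar - d)‖
          + ‖b‖ * ‖T E‖ * ‖(WithLp.equiv 2 (Fin m → ℝ)).symm qstar‖ := by linarith
      _ ≤ (4 / 3 * ‖a‖) * (σ / 4) + (4 / 3 * ‖a‖) * (σ / 4) * 1 := by
          gcongr <;> positivity
      _ = 2 / 3 * (σ * ‖a‖) := by ring
      _ = 2 / 3 := by rw [hσα, mul_one]
      _ ≤ 1 := by norm_num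
  refine ⟨hAbarDet, hq1, ?_⟩
  have hsplit : (WithLp.equiv 2 (Fin m → ℝ)).symm (Abar⁻¹.mulVec dbar)
      = (WithLp.equiv 2 (Fin m → ℝ)).symm (Abar⁻¹.mulVec dbar - qstar)
        + (WithLp.equiv 2 (Fin m → ℝ)).symm qstar := by
    rw [hεsub]; abel
  rw [eucNorm_eq, hsplit]
  calc ‖_ + _‖ ≤ ‖(WithLp.equiv 2 (Fin m → ℝ)).symm (Abar⁻¹.mulVec dbar - qstar)‖
        + ‖(WithLp.equiv 2 (Fin m → ℝ)).symm qstar‖ := norm_add_le _ _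
    _ ≤ 1 + 1 := by
        apply add_le_add
        · rw [← eucNorm_eq]; exact hq1
        · rw [← eucNorm_eq]; exact hqsn
    _ = 2 := by norm_num
end

section
/- Let m ≥ 1, let A be an invertible m×m real matrix with all entries in [−1,1], and let σ = 1/‖A⁻¹‖₂ be its smallest singular value (‖·‖₂ denotes the operator norm induced by the Euclidean vector norm). Let d ∈ ℝ^m with ‖d‖₂ ≥ c for some c ∈ (0,1], set q* = A⁻¹d, and assume ‖q*‖₂ ≤ 1. Let ξ ∈ (0,1]. Let Ā be an m×m real matrix with |Ā_{ij} − A_{ij}| ≤ ρ for all entries, where m²·ρ ≤ ξ·σ/16, and let d̄ ∈ ℝ^m with ‖d̄ − d‖_∞ ≤ ν, where ν ≤ ξ·σ·c/(32·m⁴). Then Ā is invertible and q̄ = Ā⁻¹d̄ satisfies ‖q̄ − q*‖_∞ ≤ ξ/2. -/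
open scoped Matrix.Norms.L2Operator

section Helpers

variable {m : ℕ}

lemma matL2OpNorm_eq (M : Matrix (Fin m) (Fin m) ℝ) : matL2OpNorm M = ‖M‖ := rfl

lemma eucNorm_nonneg (v : Fin m → ℝ) : 0 ≤ eucNorm v := Real.sqrt_nonneg _

lemma eucNorm_eq_norm (v : Fin m → ℝ) :
    eucNorm v = ‖(WithLp.equiv 2 (Fin m → ℝ)).symm v‖ := by
  rw [eucNorm, EuclideanSpace.norm_eq]
  congr 1
  refine Finset.sum_congr rfl fun i _ => ?_
  rw [WithLp.equiv_symm_apply, PiLp.toLp_apply, Real.norm_eq_abs, sq_abs]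

lemma abs_le_eucNorm (v : Fin m → ℝ) (i : Fin m) : |v i| ≤ eucNorm v := by
  rw [eucNorm, ← Real.sqrt_sq_eq_abs]
  exact Real.sqrt_le_sqrt
    (Finset.single_le_sum (fun j _ => sq_nonneg (v j)) (Finset.mem_univ i))

lemma eucNorm_le_of_entries_s9 (v : Fin m → ℝ) (a : ℝ) (ha : 0 ≤ a)
    (h : ∀ i, |v i| ≤ a) : eucNorm v ≤ Real.sqrt m * a := by
  rw [eucNorm]
  have hsum : ∑ i, v i ^ 2 ≤ (m : ℝ) * a ^ 2 := by
    calc ∑ i, v i ^ 2 ≤ ∑ _i : Fin m, a ^ 2 := by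
          refine Finset.sum_le_sum fun i _ => ?_
          rw [← sq_abs]
          exact pow_le_pow_left₀ (abs_nonneg _) (h i) 2
      _ = (m : ℝ) * a ^ 2 := by simp [mul_comm]
  calc Real.sqrt (∑ i, v i ^ 2) ≤ Real.sqrt ((m : ℝ) * a ^ 2) := Real.sqrt_le_sqrt hsum
    _ = Real.sqrt m * a := by
        rw [Real.sqrt_mul (Nat.cast_nonneg m), Real.sqrt_sq ha]

lemma sum_abs_le_sqrt_mul_eucNorm (v : Fin m → ℝ) :
    ∑ i, |v i| ≤ Real.sqrt m * eucNorm v := by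
  have h := sq_sum_le_card_mul_sum_sq (s := (Finset.univ : Finset (Fin m)))
    (f := fun i => |v i|)
  simp only [sq_abs, Finset.card_univ, Fintype.card_fin] at h
  have h0 : 0 ≤ ∑ i, |v i| := Finset.sum_nonneg fun i _ => abs_nonneg _
  calc ∑ i, |v i| = Real.sqrt ((∑ i, |v i|) ^ 2) := (Real.sqrt_sq h0).symm
    _ ≤ Real.sqrt ((m : ℝ) * ∑ i, v i ^ 2) := Real.sqrt_le_sqrt h
    _ = Real.sqrt m * eucNorm v := by
        rw [eucNorm, Real.sqrt_mul (Nat.cast_nonneg m)]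

lemma eucNorm_mulVec_le (M : Matrix (Fin m) (Fin m) ℝ) (v : Fin m → ℝ) :
    eucNorm (M.mulVec v) ≤ matL2OpNorm M * eucNorm v := by
  rw [eucNorm_eq_norm, eucNorm_eq_norm, matL2OpNorm_eq]
  exact (Matrix.toEuclideanCLM (𝕜 := ℝ) M).le_opNorm ((WithLp.equiv 2 (Fin m → ℝ)).symm v)

lemma matL2OpNorm_le_of_entries (M : Matrix (Fin m) (Fin m) ℝ) (a : ℝ) (ha : 0 ≤ a)
    (h : ∀ i j, |M i j| ≤ a) : matL2OpNorm M ≤ (m : ℝ) * a := by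
  rw [matL2OpNorm]
  refine ContinuousLinearMap.opNorm_le_bound _ (by positivity) fun x => ?_
  set v : Fin m → ℝ := WithLp.equiv 2 (Fin m → ℝ) x with hv
  have hxv : x = (WithLp.equiv 2 (Fin m → ℝ)).symm v := (Equiv.symm_apply_apply _ x).symm
  rw [hxv, show Matrix.toEuclideanCLM (𝕜 := ℝ) M ((WithLp.equiv 2 (Fin m → ℝ)).symm v) = (WithLp.equiv 2 (Fin m → ℝ)).symm (Matrix.toLin' M v) from rfl, ← eucNorm_eq_norm, ← eucNorm_eq_norm]
  have key : ∀ i, |Matrix.toLin' M v i| ≤ a * (Real.sqrt m * eucNorm v) := by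
    intro i
    have h1 : Matrix.toLin' M v i = ∑ j, M i j * v j := by
      rw [Matrix.toLin'_apply]; rfl
    calc |Matrix.toLin' M v i| = |∑ j, M i j * v j| := by rw [h1]
      _ ≤ ∑ j, |M i j * v j| := Finset.abs_sum_le_sum_abs _ _
      _ ≤ ∑ j, a * |v j| := by
          refine Finset.sum_le_sum fun j _ => ?_
          rw [abs_mul]
          exact mul_le_mul_of_nonneg_right (h i j) (abs_nonneg _)
      _ = a * ∑ j, |v j| := by rw [Finset.mul_sum]
      _ ≤ a * (Real.sqrt m * eucNorm v) :=
          mul_le_mul_of_nonneg_left (sum_abs_le_sqrt_mul_eucNorm v) ha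
  have hsq : Real.sqrt m * Real.sqrt m = (m : ℝ) :=
    Real.mul_self_sqrt (Nat.cast_nonneg m)
  calc eucNorm (Matrix.toLin' M v)
      ≤ Real.sqrt m * (a * (Real.sqrt m * eucNorm v)) := by
        refine eucNorm_le_of_entries_s9 _ _ ?_ key
        have := eucNorm_nonneg v
        positivity
    _ = (Real.sqrt m * Real.sqrt m) * (a * eucNorm v) := by ring
    _ = (m : ℝ) * a * eucNorm v := by rw [hsq]; ring

end Helpers

/-- Deterministic core of the paper's Lemma 6 (on-policy setting): with the tighter error
thresholds `m²ρ ≤ ξσ/16` and `ν ≤ ξσc/(32m⁴)`, the perturbed matrix `Ā` is invertible and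
the resolved solution `q̄ = Ā⁻¹d̄` is within `ξ/2` of the true solution `q* = A⁻¹d` in sup
norm. -/
theorem resolved_solution_close_in_sup_norm
    (m : ℕ) (hm : 1 ≤ m)
    (A : Matrix (Fin m) (Fin m) ℝ) (hA : IsUnit A.det)
    (hAent : ∀ i j, A i j ∈ Set.Icc (-1 : ℝ) 1)
    (σ : ℝ) (hσ : σ = 1 / matL2OpNorm A⁻¹)
    (d : Fin m → ℝ) (c : ℝ) (hc : c ∈ Set.Ioc (0:ℝ) 1)
    (hd : c ≤ eucNorm d)
    (qstar : Fin m → ℝ) (hqs : qstar = A⁻¹.mulVec d)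
    (hqsn : eucNorm qstar ≤ 1)
    (ξ : ℝ) (hξ : ξ ∈ Set.Ioc (0:ℝ) 1)
    (Abar : Matrix (Fin m) (Fin m) ℝ) (ρ : ℝ)
    (hAbar : ∀ i j, |Abar i j - A i j| ≤ ρ)
    (hρ : (m : ℝ) ^ 2 * ρ ≤ ξ * σ / 16)
    (dbar : Fin m → ℝ) (ν : ℝ)
    (hdbar : ∀ i, |dbar i - d i| ≤ ν)
    (hν : ν ≤ ξ * σ * c / (32 * (m : ℝ) ^ 4)) :
    IsUnit Abar.det ∧
    ∀ i, |Abar⁻¹.mulVec dbar i - qstar i| ≤ ξ / 2 := by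
  obtain ⟨hc0, hc1⟩ := hc
  obtain ⟨hξ0, hξ1⟩ := hξ
  have hm1 : (1 : ℝ) ≤ (m : ℝ) := by exact_mod_cast hm
  have hm0 : (0 : ℝ) < (m : ℝ) := by linarith
  haveI : Nonempty (Fin m) := ⟨⟨0, hm⟩⟩
  have hρ0 : 0 ≤ ρ := le_trans (abs_nonneg _) (hAbar ⟨0, hm⟩ ⟨0, hm⟩)
  have hν0 : 0 ≤ ν := le_trans (abs_nonneg _) (hdbar ⟨0, hm⟩)
  have hAunit : IsUnit A := (Matrix.isUnit_iff_isUnit_det A).mpr hA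
  -- ‖A⁻¹‖ > 0
  have hinv_ne : (A⁻¹ : Matrix (Fin m) (Fin m) ℝ) ≠ 0 := by
    intro h
    have h1 := Matrix.nonsing_inv_mul A hA
    rw [h, zero_mul] at h1
    have h2 := congrFun (congrFun h1 ⟨0, hm⟩) ⟨0, hm⟩
    simp [Matrix.one_apply] at h2
  have hnormpos : 0 < ‖(A⁻¹ : Matrix (Fin m) (Fin m) ℝ)‖ := norm_pos_iff.mpr hinv_ne
  have hσ' : σ = 1 / ‖(A⁻¹ : Matrix (Fin m) (Fin m) ℝ)‖ := by
    rw [hσ, matL2OpNorm_eq]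
  have hσ0 : 0 < σ := by rw [hσ']; positivity
  have hAinvnorm : ‖(A⁻¹ : Matrix (Fin m) (Fin m) ℝ)‖ = 1 / σ := by
    rw [hσ']
    field_simp
  set E : Matrix (Fin m) (Fin m) ℝ := Abar - A with hE
  have hEnorm : ‖E‖ ≤ (m : ℝ) * ρ := by
    rw [← matL2OpNorm_eq]
    refine matL2OpNorm_le_of_entries _ ρ hρ0 fun i j => ?_
    simpa [hE, Matrix.sub_apply] using hAbar i j
  set t : Matrix (Fin m) (Fin m) ℝ := A⁻¹ * E with ht
  have hmρ : (m : ℝ) * ρ ≤ ξ * σ / 16 := by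
    have h := mul_nonneg (mul_nonneg hm0.le hρ0) (sub_nonneg.mpr hm1)
    nlinarith [hρ]
  have htn : ‖t‖ ≤ ξ / 16 := by
    calc ‖t‖ ≤ ‖(A⁻¹ : Matrix (Fin m) (Fin m) ℝ)‖ * ‖E‖ := norm_mul_le _ _
      _ ≤ (1 / σ) * (ξ * σ / 16) := by
          rw [hAinvnorm]
          exact mul_le_mul_of_nonneg_left (le_trans hEnorm hmρ) (by positivity)
      _ = ξ / 16 := by field_simp
  have htlt : ‖t‖ < 1 := lt_of_le_of_lt htn (by linarith)
  haveI : CompleteSpace (Matrix (Fin m) (Fin m) ℝ) := FiniteDimensional.complete ℝ _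
  have hwu : IsUnit ((1 : Matrix (Fin m) (Fin m) ℝ) + t) := by
    refine ⟨Units.oneSub (-t) (by rwa [norm_neg]), ?_⟩
    simp [Units.oneSub, sub_neg_eq_add]
  set w : Matrix (Fin m) (Fin m) ℝ := 1 + t with hw
  have hfact : Abar = A * w := by
    rw [hw, mul_add, mul_one, ht, ← mul_assoc, Matrix.mul_nonsing_inv A hA, one_mul, hE]
    abel
  have hAbarUnit : IsUnit Abar := hfact ▸ hAunit.mul hwu
  refine ⟨(Matrix.isUnit_iff_isUnit_det Abar).mp hAbarUnit, ?_⟩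
  have hwdet : IsUnit w.det := (Matrix.isUnit_iff_isUnit_det w).mp hwu
  have hwinv : w⁻¹ * w = 1 := Matrix.nonsing_inv_mul w hwdet
  have hwinv_eq : w⁻¹ = 1 - w⁻¹ * t := by
    have h1 : w⁻¹ * (1 + t) = 1 := by rw [← hw]; exact hwinv
    rw [mul_add, mul_one] at h1
    exact eq_sub_of_add_eq h1
  have h1norm : ‖(1 : Matrix (Fin m) (Fin m) ℝ)‖ = 1 := by
    rw [Matrix.cstar_norm_def, map_one]
    exact ContinuousLinearMap.norm_id
  have hSn : ‖(w⁻¹ : Matrix (Fin m) (Fin m) ℝ)‖ ≤ 16 / 15 := by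
    have h2 : ‖(w⁻¹ : Matrix (Fin m) (Fin m) ℝ)‖ ≤ 1 + ‖(w⁻¹ : Matrix (Fin m) (Fin m) ℝ)‖ * ‖t‖ := by
      calc ‖(w⁻¹ : Matrix (Fin m) (Fin m) ℝ)‖ = ‖(1 : Matrix (Fin m) (Fin m) ℝ) - w⁻¹ * t‖ := by
            rw [← hwinv_eq]
        _ ≤ ‖(1 : Matrix (Fin m) (Fin m) ℝ)‖ + ‖w⁻¹ * t‖ := norm_sub_le _ _
        _ ≤ 1 + ‖(w⁻¹ : Matrix (Fin m) (Fin m) ℝ)‖ * ‖t‖ := by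
            rw [h1norm]
            exact add_le_add le_rfl (norm_mul_le _ _)
    nlinarith [norm_nonneg (w⁻¹ : Matrix (Fin m) (Fin m) ℝ), htn, norm_nonneg t]
  have hAbarinv : Abar⁻¹ = w⁻¹ * A⁻¹ := by rw [hfact, Matrix.mul_inv_rev]
  -- key identity
  have hkey : Abar⁻¹.mulVec d = qstar - (w⁻¹ * t).mulVec qstar := by
    have hsplit : w⁻¹ * A⁻¹ = A⁻¹ - w⁻¹ * t * A⁻¹ := by
      nth_rewrite 1 [hwinv_eq]
      rw [sub_mul, one_mul]
    rw [hAbarinv, hsplit, Matrix.sub_mulVec, hqs, Matrix.mulVec_mulVec]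
  -- bounds
  have hq1 : eucNorm ((w⁻¹ * t).mulVec qstar) ≤ ξ / 15 := by
    have h3 : matL2OpNorm (w⁻¹ * t) ≤ (16 / 15) * (ξ / 16) := by
      rw [matL2OpNorm_eq]
      calc ‖w⁻¹ * t‖ ≤ ‖(w⁻¹ : Matrix (Fin m) (Fin m) ℝ)‖ * ‖t‖ := norm_mul_le _ _
        _ ≤ (16 / 15) * (ξ / 16) := by
            apply mul_le_mul hSn htn (norm_nonneg t) (by norm_num)
    calc eucNorm ((w⁻¹ * t).mulVec qstar)
        ≤ matL2OpNorm (w⁻¹ * t) * eucNorm qstar := eucNorm_mulVec_le _ _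
      _ ≤ ((16 / 15) * (ξ / 16)) * 1 := by
          apply mul_le_mul h3 hqsn (eucNorm_nonneg _) (by positivity)
      _ = ξ / 15 := by ring
  have hq2 : eucNorm (Abar⁻¹.mulVec (dbar - d)) ≤ ξ / 30 := by
    have hdd : eucNorm (dbar - d) ≤ Real.sqrt m * ν := by
      refine eucNorm_le_of_entries_s9 _ ν hν0 fun i => ?_
      simpa using hdbar i
    have hAbi : matL2OpNorm Abar⁻¹ ≤ (16 / 15) * (1 / σ) := by
      rw [matL2OpNorm_eq, hAbarinv]
      calc ‖w⁻¹ * A⁻¹‖ ≤ ‖(w⁻¹ : Matrix (Fin m) (Fin m) ℝ)‖ * ‖(A⁻¹ : Matrix (Fin m) (Fin m) ℝ)‖ :=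
            norm_mul_le _ _
        _ ≤ (16 / 15) * (1 / σ) := by
            rw [hAinvnorm]
            exact mul_le_mul_of_nonneg_right hSn (by positivity)
    have hsm : Real.sqrt m ≤ (m : ℝ) ^ 4 := by
      have h8 : (m : ℝ) ≤ ((m : ℝ) ^ 4) ^ 2 := by
        calc (m : ℝ) ≤ (m : ℝ) ^ 8 := le_self_pow₀ hm1 (by norm_num)
          _ = ((m : ℝ) ^ 4) ^ 2 := by ring
      calc Real.sqrt m ≤ Real.sqrt (((m : ℝ) ^ 4) ^ 2) := Real.sqrt_le_sqrt h8
        _ = (m : ℝ) ^ 4 := Real.sqrt_sq (by positivity)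
    have hsν : Real.sqrt m * ν ≤ ξ * σ * c / 32 := by
      calc Real.sqrt m * ν ≤ (m : ℝ) ^ 4 * (ξ * σ * c / (32 * (m : ℝ) ^ 4)) :=
            mul_le_mul hsm hν hν0 (by positivity)
        _ = ξ * σ * c / 32 := by field_simp
    calc eucNorm (Abar⁻¹.mulVec (dbar - d))
        ≤ matL2OpNorm Abar⁻¹ * eucNorm (dbar - d) := eucNorm_mulVec_le _ _
      _ ≤ ((16 / 15) * (1 / σ)) * (Real.sqrt m * ν) := by
          apply mul_le_mul hAbi hdd (eucNorm_nonneg _) (by positivity)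
      _ ≤ ((16 / 15) * (1 / σ)) * (ξ * σ * c / 32) := by
          apply mul_le_mul_of_nonneg_left hsν (by positivity)
      _ = ξ * c / 30 := by field_simp; ring
      _ ≤ ξ / 30 := by
          have hξc : ξ * c ≤ ξ := mul_le_of_le_one_right hξ0.le hc1
          linarith
  -- conclusion
  have hsplit2 : Abar⁻¹.mulVec dbar
      = Abar⁻¹.mulVec (dbar - d) + (qstar - (w⁻¹ * t).mulVec qstar) := by
    rw [← hkey, ← Matrix.mulVec_add, sub_add_cancel]
  intro i
  have hi := congrFun hsplit2 i
  simp only [Pi.add_apply, Pi.sub_apply] at hi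
  have harg : Abar⁻¹.mulVec (dbar - d) i + (qstar i - (w⁻¹ * t).mulVec qstar i) - qstar i
      = Abar⁻¹.mulVec (dbar - d) i - (w⁻¹ * t).mulVec qstar i := by ring
  have habs : |Abar⁻¹.mulVec dbar i - qstar i|
      ≤ |Abar⁻¹.mulVec (dbar - d) i| + |(w⁻¹ * t).mulVec qstar i| := by
    rw [hi, harg]
    exact abs_sub _ _
  have hb1 := le_trans (abs_le_eucNorm (Abar⁻¹.mulVec (dbar - d)) i) hq2
  have hb2 := le_trans (abs_le_eucNorm ((w⁻¹ * t).mulVec qstar) i) hq1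
  linarith
end
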